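/- arXiv:2103.08276 — 2 statements merged into one kernel-verified Lean document; each statement's English description precedes it below -/
import Mathlib

section
/- Let R be a ring with local units and let (P_i, φ_{ij}) be a split direct system, with splittings ψ_{ji}, of finitely generated unitary left R-modules, and let P together with R-module homomorphisms φ_i : P_i → P be a direct limit of this system. Then: (a) for each k there is an R-module homomorphism ψ_k : P → P_k with φ_kψ_k = id_{P_k}; (b) for each i ≤ j, ψ_jψ_{ji} = ψ_i; (c) the set S = {g ∈ End_R(P) | g factors through one of the projections ψ_i} is a subring of End_R(P) isomorphic to the direct limit of the rings End_R(P_i), satisfying S·End_R(P) = S; moreover P is a unitary R-S-bimodule and Pf is a finitely generated unitary left R-module for every idempotent f ∈ S. -/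
set_option linter.unusedVariables false

/-! ### Core: non-unital rings with local units, modules, homomorphisms, categories -/

universe u v w

open MulOpposite CategoryTheory

/-- A ring with local units: every finite subset is contained in a subring
of the form `eRe` for an idempotent `e`; equivalently, every finite subset
admits an idempotent acting as a two-sided identity on it. -/
class HasLocalUnits (R : Type u) [NonUnitalRing R] : Prop where
  exists_unit : ∀ s : Finset R, ∃ e : R, e * e = e ∧ ∀ x ∈ s, e * x = x ∧ x * e = x

/-- A (left) module over a non-unital ring. -/
class LMod (R : Type u) [NonUnitalRing R] (M : Type v) [AddCommGroup M] extends SMul R M where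
  smul_add' : ∀ (r : R) (m n : M), r • (m + n) = r • m + r • n
  add_smul' : ∀ (r s : R) (m : M), (r + s) • m = r • m + s • m
  mul_smul' : ∀ (r s : R) (m : M), (r * s) • m = r • (s • m)

section basic
variable {R : Type u} [NonUnitalRing R] {M : Type v} [AddCommGroup M] [LMod R M]

theorem LMod.smul_zero' (r : R) : r • (0 : M) = 0 := by
  have h := LMod.smul_add' r (0 : M) 0
  rw [add_zero] at h
  have h2 : r • (0 : M) + r • (0 : M) = r • (0 : M) + 0 := by rw [← h, add_zero]
  exact add_left_cancel h2

theorem LMod.zero_smul' (m : M) : (0 : R) • m = 0 := by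
  have h := LMod.add_smul' (0 : R) 0 m
  rw [add_zero] at h
  have h2 : (0 : R) • m + (0 : R) • m = (0 : R) • m + 0 := by rw [← h, add_zero]
  exact add_left_cancel h2

theorem LMod.smul_neg' (r : R) (m : M) : r • (-m) = -(r • m) := by
  have h : r • m + r • (-m) = 0 := by
    rw [← LMod.smul_add' r m (-m), add_neg_cancel, LMod.smul_zero']
  exact eq_neg_of_add_eq_zero_right h

end basic

/-- `f : M → N` is a homomorphism of (non-unital) `R`-modules. -/
structure IsLHom (R : Type u) [NonUnitalRing R] {M : Type v} {N : Type w}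
    [AddCommGroup M] [AddCommGroup N] [LMod R M] [LMod R N] (f : M → N) : Prop where
  map_add : ∀ x y, f (x + y) = f x + f y
  map_smul : ∀ (r : R) (x : M), f (r • x) = r • f x

theorem IsLHom.map_zero {R : Type u} [NonUnitalRing R] {M : Type v} {N : Type w}
    [AddCommGroup M] [AddCommGroup N] [LMod R M] [LMod R N] {f : M → N}
    (hf : IsLHom R f) : f 0 = 0 := by
  have h := hf.map_add 0 0
  rw [add_zero] at h
  have h2 : f 0 + f 0 = f 0 + 0 := by rw [← h, add_zero]
  exact add_left_cancel h2

theorem IsLHom.map_neg {R : Type u} [NonUnitalRing R] {M : Type v} {N : Type w}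
    [AddCommGroup M] [AddCommGroup N] [LMod R M] [LMod R N] {f : M → N}
    (hf : IsLHom R f) (x : M) : f (-x) = -(f x) := by
  have h : f x + f (-x) = 0 := by rw [← hf.map_add, add_neg_cancel, hf.map_zero]
  exact eq_neg_of_add_eq_zero_right h

/-- The type of homomorphisms of (non-unital) `R`-modules. -/
def LinMap (R : Type u) [NonUnitalRing R] (M : Type v) (N : Type w)
    [AddCommGroup M] [AddCommGroup N] [LMod R M] [LMod R N] : Type (max v w) :=
  {f : M → N // IsLHom R f}

namespace LinMap

variable {R : Type u} [NonUnitalRing R] {M : Type v} {N : Type w}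
    [AddCommGroup M] [AddCommGroup N] [LMod R M] [LMod R N]

theorem ext {f g : LinMap R M N} (h : f.1 = g.1) : f = g := Subtype.ext h

instance : Add (LinMap R M N) :=
  ⟨fun f g => ⟨fun x => f.1 x + g.1 x,
    ⟨fun x y => by rw [f.2.map_add, g.2.map_add]; abel,
     fun r x => by rw [f.2.map_smul, g.2.map_smul, LMod.smul_add']⟩⟩⟩

instance : Zero (LinMap R M N) :=
  ⟨⟨fun _ => 0, ⟨fun _ _ => by rw [add_zero], fun r _ => (LMod.smul_zero' r).symm⟩⟩⟩

instance : Neg (LinMap R M N) :=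
  ⟨fun f => ⟨fun x => -(f.1 x),
    ⟨fun x y => by rw [f.2.map_add]; abel,
     fun r x => by rw [f.2.map_smul, LMod.smul_neg']⟩⟩⟩

instance : AddCommGroup (LinMap R M N) where
  add_assoc f g h := ext (funext fun x => add_assoc _ _ _)
  zero_add f := ext (funext fun x => zero_add _)
  add_zero f := ext (funext fun x => add_zero _)
  add_comm f g := ext (funext fun x => add_comm _ _)
  neg_add_cancel f := ext (funext fun x => neg_add_cancel _)
  nsmul := nsmulRec
  zsmul := zsmulRec

@[simp] theorem add_apply (f g : LinMap R M N) (x : M) : (f + g).1 x = f.1 x + g.1 x := rfl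
@[simp] theorem zero_apply (x : M) : (0 : LinMap R M N).1 x = 0 := rfl
@[simp] theorem neg_apply (f : LinMap R M N) (x : M) : (-f).1 x = -(f.1 x) := rfl

end LinMap

/-- The endomorphism ring of a module over a non-unital ring, with the
"diagrammatic" multiplication `(f * g) x = g (f x)` (i.e. `f * g` means
"first `f`, then `g`", matching homomorphisms written on the right). -/
instance LinMap.instNonUnitalRing {R : Type u} [NonUnitalRing R] {M : Type v}
    [AddCommGroup M] [LMod R M] : NonUnitalRing (LinMap R M M) :=
  { (inferInstance : AddCommGroup (LinMap R M M)) with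
    mul := fun f g => ⟨fun x => g.1 (f.1 x),
      ⟨fun x y => by rw [f.2.map_add, g.2.map_add], fun r x => by rw [f.2.map_smul, g.2.map_smul]⟩⟩
    left_distrib := fun f g h => LinMap.ext (funext fun x => rfl)
    right_distrib := fun f g h => LinMap.ext (funext fun x => h.2.map_add _ _)
    zero_mul := fun f => LinMap.ext (funext fun x => f.2.map_zero)
    mul_zero := fun f => LinMap.ext (funext fun x => rfl)
    mul_assoc := fun f g h => LinMap.ext (funext fun x => rfl) }

@[simp] theorem LinMap.mul_apply {R : Type u} [NonUnitalRing R] {M : Type v}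
    [AddCommGroup M] [LMod R M] (f g : LinMap R M M) (x : M) : (f * g).1 x = g.1 (f.1 x) := rfl

/-- A module `M` over a non-unital ring `R` is unitary if `RM = M`. -/
def IsUnitary (R : Type u) [NonUnitalRing R] (M : Type v) [AddCommGroup M] [LMod R M] : Prop :=
  ∀ m : M, m ∈ AddSubgroup.closure {x : M | ∃ (r : R) (n : M), x = r • n}

/-- The `R`-submodule (as an additive subgroup) generated by a subset. -/
def lspan (R : Type u) [NonUnitalRing R] {M : Type v} [AddCommGroup M] [LMod R M]
    (X : Set M) : AddSubgroup M :=
  AddSubgroup.closure (X ∪ {m | ∃ (r : R) (x : M), x ∈ X ∧ m = r • x})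

/-- A subset `A` of a module is finitely generated (as an `R`-submodule). -/
def IsFGSet (R : Type u) [NonUnitalRing R] {M : Type v} [AddCommGroup M] [LMod R M]
    (A : Set M) : Prop :=
  ∃ s : Finset M, (↑s : Set M) ⊆ A ∧ ∀ a ∈ A, a ∈ lspan R (↑s : Set M)

/-- A finitely generated module over a non-unital ring. -/
def IsFG (R : Type u) [NonUnitalRing R] (M : Type v) [AddCommGroup M] [LMod R M] : Prop :=
  ∃ s : Finset M, ∀ m : M, m ∈ lspan R (↑s : Set M)

/-- The category of unitary left modules over a ring with local units
(objects: unitary left `R`-modules). -/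
structure UMod (R : Type u) [NonUnitalRing R] : Type (max u (v + 1)) where
  carrier : Type v
  [grp : AddCommGroup carrier]
  [mod : LMod R carrier]
  unitary : IsUnitary R carrier

attribute [instance] UMod.grp UMod.mod

instance {R : Type u} [NonUnitalRing R] : CoeSort (UMod.{u, v} R) (Type v) := ⟨UMod.carrier⟩

instance UMod.instCategory {R : Type u} [NonUnitalRing R] : Category (UMod.{u, v} R) where
  Hom M N := LinMap R M.carrier N.carrier
  id M := ⟨fun x => x, ⟨fun _ _ => rfl, fun _ _ => rfl⟩⟩
  comp f g := ⟨fun x => g.1 (f.1 x),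
    ⟨fun x y => by rw [f.2.map_add, g.2.map_add], fun r x => by rw [f.2.map_smul, g.2.map_smul]⟩⟩
  id_comp f := LinMap.ext rfl
  comp_id f := LinMap.ext rfl
  assoc f g h := LinMap.ext rfl

@[simp] theorem UMod.comp_apply {R : Type u} [NonUnitalRing R] {M N K : UMod.{u, v} R}
    (f : M ⟶ N) (g : N ⟶ K) (x : M.carrier) : (f ≫ g).1 x = g.1 (f.1 x) := rfl

@[simp] theorem UMod.id_apply {R : Type u} [NonUnitalRing R] {M : UMod.{u, v} R}
    (x : M.carrier) : (𝟙 M : M ⟶ M).1 x = x := rfl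

instance UMod.instPreadditive {R : Type u} [NonUnitalRing R] :
    Preadditive (UMod.{u, v} R) where
  homGroup M N := inferInstanceAs (AddCommGroup (LinMap R M.carrier N.carrier))
  add_comp M N K f f' g := LinMap.ext (funext fun x => g.2.map_add _ _)
  comp_add M N K f g g' := LinMap.ext (funext fun x => rfl)

/-- A unitary module `P` is a generator of the category of unitary left `R`-modules. -/
def IsGenerator (R : Type u) [NonUnitalRing R] (P : UMod.{u, v} R) : Prop :=
  ∀ (M B : UMod.{u, v} R) (f g : M ⟶ B), f ≠ g → ∃ h : P ⟶ M, h ≫ f ≠ h ≫ g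

/-- A set of unitary modules is a cogenerating set for the category of
unitary left `R`-modules. -/
def IsCogenSet (R : Type u) [NonUnitalRing R] (𝒰 : Set (UMod.{u, v} R)) : Prop :=
  ∀ (B M : UMod.{u, v} R) (f g : B ⟶ M), f ≠ g → ∃ U' ∈ 𝒰, ∃ h : M ⟶ U', f ≫ h ≠ g ≫ h
/-! ### The largest unitary submodule `C·H` of a module `H`, and induced
module structures on hom-groups -/

section umax

variable (C : Type u) [NonUnitalRing C] (H : Type v) [AddCommGroup H] [LMod C H]

/-- `C·H`, the largest unitary `C`-submodule of the `C`-module `H`. -/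
def umax : AddSubgroup H :=
  AddSubgroup.closure {h : H | ∃ (c : C) (h' : H), h = c • h'}

variable {C H}

theorem smul_mem_umax (c : C) (h : H) : c • h ∈ umax C H :=
  AddSubgroup.subset_closure ⟨c, h, rfl⟩

/-- An additive, `C`-equivariant map carries `C·H` into `C·H'`. -/
theorem umax_mapsTo {H' : Type w} [AddCommGroup H'] [LMod C H'] (T : H → H')
    (hadd : ∀ x y, T (x + y) = T x + T y) (hsmul : ∀ (c : C) (x : H), T (c • x) = c • T x)
    {h : H} (hh : h ∈ umax C H) : T h ∈ umax C H' := by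
  have hT : IsLHom C T := ⟨hadd, hsmul⟩
  induction hh using AddSubgroup.closure_induction with
  | mem x hx =>
    obtain ⟨c, h', rfl⟩ := hx
    rw [hsmul]; exact smul_mem_umax c (T h')
  | zero => rw [hT.map_zero]; exact (umax C H').zero_mem
  | add x y hx hy ihx ihy => rw [hadd]; exact (umax C H').add_mem ihx ihy
  | neg x hx ihx => rw [hT.map_neg]; exact (umax C H').neg_mem ihx

instance umax.instLMod : LMod C ↥(umax C H) where
  smul c h := ⟨c • h.1, smul_mem_umax c h.1⟩
  smul_add' c m n := Subtype.ext (LMod.smul_add' c m.1 n.1)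
  add_smul' c c' m := Subtype.ext (LMod.add_smul' c c' m.1)
  mul_smul' c c' m := Subtype.ext (LMod.mul_smul' c c' m.1)

@[simp] theorem umax.smul_coe (c : C) (h : ↥(umax C H)) : (c • h).1 = c • h.1 := rfl

/-- If a second ring `D` acts on `H` commuting with the `C`-action,
then `C·H` is stable under the `D`-action. -/
theorem umax_stable {D : Type w} [NonUnitalRing D] [LMod D H] [SMulCommClass C D H]
    (d : D) {h : H} (hh : h ∈ umax C H) : d • h ∈ umax C H :=
  umax_mapsTo (fun x => d • x) (fun x y => LMod.smul_add' d x y)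
    (fun c x => (smul_comm c d x).symm) hh

instance umax.instLMod₂ {D : Type w} [NonUnitalRing D] [LMod D H] [SMulCommClass C D H] :
    LMod D ↥(umax C H) where
  smul d h := ⟨d • h.1, umax_stable d h.2⟩
  smul_add' d m n := Subtype.ext (LMod.smul_add' d m.1 n.1)
  add_smul' d d' m := Subtype.ext (LMod.add_smul' d d' m.1)
  mul_smul' d d' m := Subtype.ext (LMod.mul_smul' d d' m.1)

instance umax.instSMulCommClass {D : Type w} [NonUnitalRing D] [LMod D H]
    [SMulCommClass C D H] : SMulCommClass C D ↥(umax C H) :=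
  ⟨fun c d h => Subtype.ext (smul_comm c d h.1)⟩

/-- If `C` has local units, then `C·H` is a unitary `C`-module. -/
theorem umax_unitary [HasLocalUnits C] : IsUnitary C ↥(umax C H) := by
  intro m
  obtain ⟨h, hh⟩ := m
  induction hh using AddSubgroup.closure_induction with
  | mem x hx =>
    obtain ⟨c, h', rfl⟩ := hx
    obtain ⟨e, he, hec⟩ := HasLocalUnits.exists_unit {c}
    have hc := (hec c (Finset.mem_singleton_self c)).1
    refine AddSubgroup.subset_closure ⟨e, ⟨c • h', smul_mem_umax c h'⟩, ?_⟩
    refine Subtype.ext ?_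
    show c • h' = e • (c • h')
    rw [← LMod.mul_smul', hc]
  | zero =>
    have : (⟨(0 : H), (umax C H).zero_mem⟩ : ↥(umax C H)) = 0 := rfl
    rw [this]; exact AddSubgroup.zero_mem _
  | add x y hx hy ihx ihy =>
    have : (⟨x + y, (umax C H).add_mem hx hy⟩ : ↥(umax C H)) =
        ⟨x, hx⟩ + ⟨y, hy⟩ := rfl
    rw [this]; exact AddSubgroup.add_mem _ ihx ihy
  | neg x hx ihx =>
    have : (⟨-x, (umax C H).neg_mem hx⟩ : ↥(umax C H)) = -⟨x, hx⟩ := rfl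
    rw [this]; exact AddSubgroup.neg_mem _ ihx

end umax

section regular

variable (R : Type u) [NonUnitalRing R]

/-- The left regular module structure of a non-unital ring on itself. -/
instance NonUnitalRing.instLModSelf : LMod R R where
  smul := (· * ·)
  smul_add' := mul_add
  add_smul' := add_mul
  mul_smul' := mul_assoc

@[simp] theorem NonUnitalRing.smul_def (r s : R) : r • s = r * s := rfl

/-- The right regular module structure, as a left module over the opposite ring. -/
instance NonUnitalRing.instLModSelfOp : LMod Rᵐᵒᵖ R where
  smul r s := s * r.unop
  smul_add' r m n := add_mul m n r.unop
  add_smul' r r' m := mul_add m r.unop r'.unop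
  mul_smul' r r' m := (mul_assoc m r'.unop r.unop).symm

@[simp] theorem NonUnitalRing.op_smul_def (r : Rᵐᵒᵖ) (s : R) : r • s = s * r.unop := rfl

instance : SMulCommClass R Rᵐᵒᵖ R :=
  ⟨fun r s x => by
    show r * (x * s.unop) = (r * x) * s.unop
    rw [mul_assoc]⟩

/-- Local units pass to the opposite ring. -/
instance instHasLocalUnitsOp [HasLocalUnits R] : HasLocalUnits Rᵐᵒᵖ where
  exists_unit s := by
    classical
    obtain ⟨e, he, h⟩ := HasLocalUnits.exists_unit (R := R) (s.image MulOpposite.unop)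
    refine ⟨MulOpposite.op e, by rw [← MulOpposite.op_mul, he], fun x hx => ?_⟩
    have hx' := h x.unop (Finset.mem_image_of_mem MulOpposite.unop hx)
    constructor
    · conv_lhs => rw [← MulOpposite.op_unop x, ← MulOpposite.op_mul, hx'.2, MulOpposite.op_unop]
    · conv_lhs => rw [← MulOpposite.op_unop x, ← MulOpposite.op_mul, hx'.1, MulOpposite.op_unop]

end regular

section homact

variable {A B C : Type u} [NonUnitalRing A] [NonUnitalRing B] [NonUnitalRing C]
variable {X : Type v} {Y : Type w} [AddCommGroup X] [AddCommGroup Y] [LMod B X] [LMod B Y]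

/-- The action of `A` on `Hom_B(X, Y)` by precomposition with the right
`A`-action on `X` (homomorphisms written on the right: `(a • f) x = f (x·a)`). -/
instance LinMap.instLModPre [LMod Aᵐᵒᵖ X] [SMulCommClass B Aᵐᵒᵖ X] :
    LMod A (LinMap B X Y) where
  smul a f := ⟨fun x => f.1 (op a • x),
    ⟨fun x y => by rw [LMod.smul_add', f.2.map_add],
     fun r x => by rw [← smul_comm r (op a) x, f.2.map_smul]⟩⟩
  smul_add' a f g := LinMap.ext rfl
  add_smul' a a' f := LinMap.ext (funext fun x => by
    show f.1 (op (a + a') • x) = f.1 (op a • x) + f.1 (op a' • x)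
    rw [← f.2.map_add, ← LMod.add_smul']
    rfl)
  mul_smul' a a' f := LinMap.ext (funext fun x => by
    show f.1 (op (a * a') • x) = f.1 (op a' • (op a • x))
    rw [← LMod.mul_smul']
    rfl)

theorem LinMap.pre_smul_apply [LMod Aᵐᵒᵖ X] [SMulCommClass B Aᵐᵒᵖ X]
    (a : A) (f : LinMap B X Y) (x : X) : (a • f).1 x = f.1 (op a • x) := rfl

/-- The action of `C` on `Hom_B(X, Y)` by postcomposition with a commuting
`C`-action on `Y`. -/
instance LinMap.instLModPost [LMod C Y] [SMulCommClass B C Y] :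
    LMod C (LinMap B X Y) where
  smul c f := ⟨fun x => c • f.1 x,
    ⟨fun x y => by rw [f.2.map_add, LMod.smul_add'],
     fun r x => by rw [f.2.map_smul]; exact (smul_comm r c (f.1 x)).symm⟩⟩
  smul_add' c f g := LinMap.ext (funext fun x => LMod.smul_add' c (f.1 x) (g.1 x))
  add_smul' c c' f := LinMap.ext (funext fun x => LMod.add_smul' c c' (f.1 x))
  mul_smul' c c' f := LinMap.ext (funext fun x => LMod.mul_smul' c c' (f.1 x))

theorem LinMap.post_smul_apply [LMod C Y] [SMulCommClass B C Y]
    (c : C) (f : LinMap B X Y) (x : X) : (c • f).1 x = c • (f.1 x) := rfl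

/-- Pre- and postcomposition actions on hom-groups commute. -/
instance LinMap.instSMulCommClassPrePost [LMod Aᵐᵒᵖ X] [SMulCommClass B Aᵐᵒᵖ X]
    [LMod C Y] [SMulCommClass B C Y] : SMulCommClass A C (LinMap B X Y) :=
  ⟨fun a c f => LinMap.ext rfl⟩

end homact
/-! ### Split direct systems and direct limits of unitary modules -/

section dirsys

variable (R : Type u) [NonUnitalRing R]

/-- A split direct system of unitary left `R`-modules, indexed by a
quasi-ordered set `(ι, rel)`: a direct system `(P_i, φ_{ij})` together with
splittings `ψ_{ji} : P_j → P_i` (for `i ≤ j`) such that `φ_{ij} ψ_{ji} = id`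
and `ψ_{kj} ψ_{ji} = ψ_{ki}`. -/
structure SplitSystem (ι : Type w) (rel : ι → ι → Prop) : Type (max u w (v + 1)) where
  obj : ι → UMod.{u, v} R
  map : ∀ {i j : ι}, rel i j → (obj i ⟶ obj j)
  split : ∀ {i j : ι}, rel i j → (obj j ⟶ obj i)
  map_self : ∀ {i : ι} (h : rel i i) (x : (obj i).carrier), (map h).1 x = x
  map_map : ∀ {i j k : ι} (hij : rel i j) (hjk : rel j k) (hik : rel i k)
    (x : (obj i).carrier), (map hjk).1 ((map hij).1 x) = (map hik).1 x
  split_map : ∀ {i j : ι} (h : rel i j) (x : (obj i).carrier),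
    (split h).1 ((map h).1 x) = x
  split_split : ∀ {i j k : ι} (hij : rel i j) (hjk : rel j k) (hik : rel i k)
    (x : (obj k).carrier), (split hij).1 ((split hjk).1 x) = (split hik).1 x

/-- `P`, together with homomorphisms `φ_i : P_i → P`, is a direct limit of the
direct system `(P_i, φ_{ij})` (with directed index set): the `φ_i` are
compatible, every element of `P` comes from some `P_i`, and everything killed
by `φ_i` is eventually killed in the system. -/
structure LimitCocone {ι : Type w} {rel : ι → ι → Prop} (D : SplitSystem.{u, v} R ι rel)
    (P : Type v) [AddCommGroup P] [LMod R P] : Type (max u w v) where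
  incl : ∀ i, LinMap R (D.obj i).carrier P
  compat : ∀ {i j : ι} (h : rel i j) (x : (D.obj i).carrier),
    (incl j).1 ((D.map h).1 x) = (incl i).1 x
  exhaustive : ∀ x : P, ∃ (i : ι) (y : (D.obj i).carrier), (incl i).1 y = x
  eventually_zero : ∀ i (y : (D.obj i).carrier), (incl i).1 y = 0 →
    ∃ j, ∃ h : rel i j, (D.map h).1 y = 0

/-- A unitary left `R`-module is locally projective if it is a direct limit of a
split direct system of finitely generated projective unitary left `R`-modules. -/
def IsLocallyProjective (P : Type v) [AddCommGroup P] [LMod R P] : Prop :=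
  ∃ (ι : Type v) (rel : ι → ι → Prop),
    (∀ i, rel i i) ∧ (∀ {i j k}, rel i j → rel j k → rel i k) ∧
    Nonempty ι ∧ (∀ i j, ∃ k, rel i k ∧ rel j k) ∧
    ∃ (D : SplitSystem.{u, v} R ι rel) (_ : LimitCocone R D P),
      ∀ i, IsFG R (D.obj i).carrier ∧ CategoryTheory.Projective (D.obj i)

variable {R}

/-- The transition maps `Ω_{ij} : End_R(P_i) → End_R(P_j)`, `α ↦ ψ_{ji} α φ_{ij}`,
of the direct system of endomorphism rings associated to a split direct system. -/
def SplitSystem.endTrans {ι : Type w} {rel : ι → ι → Prop}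
    (D : SplitSystem.{u, v} R ι rel) {i j : ι} (h : rel i j)
    (a : LinMap R (D.obj i).carrier (D.obj i).carrier) :
    LinMap R (D.obj j).carrier (D.obj j).carrier :=
  ⟨fun x => (D.map h).1 (a.1 ((D.split h).1 x)),
   ⟨fun x y => by rw [(D.split h).2.map_add, a.2.map_add, (D.map h).2.map_add],
    fun r x => by rw [(D.split h).2.map_smul, a.2.map_smul, (D.map h).2.map_smul]⟩⟩

end dirsys
/-! ### The functor `SHom_R(P,−)` and related constructions for a bimodule `P` -/

section shom

variable (R S : Type u) [NonUnitalRing R] [NonUnitalRing S]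
variable (P : Type u) [AddCommGroup P] [LMod R P] [LMod Sᵐᵒᵖ P] [SMulCommClass R Sᵐᵒᵖ P]

/-- `SHom_R(P,M) = S·Hom_R(P,M)`, the largest unitary left `S`-submodule of
`Hom_R(P,M)`, as a type. -/
abbrev SHom (M : Type u) [AddCommGroup M] [LMod R M] : Type u :=
  ↥(umax S (LinMap R P M))

variable {R S P}

/-- The action of `SHom_R(P,−)` on a homomorphism `g : M → N` (postcomposition). -/
def sHomMap {M N : Type u} [AddCommGroup M] [AddCommGroup N] [LMod R M] [LMod R N]
    (g : LinMap R M N) (α : SHom R S P M) : SHom R S P N :=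
  ⟨⟨fun x => g.1 (α.1.1 x),
    ⟨fun x y => by rw [α.1.2.map_add, g.2.map_add],
     fun r x => by rw [α.1.2.map_smul, g.2.map_smul]⟩⟩,
   umax_mapsTo (C := S)
     (fun f => ⟨fun x => g.1 (f.1 x),
       ⟨fun x y => by rw [f.2.map_add, g.2.map_add],
        fun r x => by rw [f.2.map_smul, g.2.map_smul]⟩⟩)
     (fun f f' => LinMap.ext (funext fun x => g.2.map_add _ _))
     (fun s f => LinMap.ext rfl) α.2⟩

theorem sHomMap_apply {M N : Type u} [AddCommGroup M] [AddCommGroup N] [LMod R M]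
    [LMod R N] (g : LinMap R M N) (α : SHom R S P M) (x : P) :
    ((sHomMap g α).1).1 x = g.1 (α.1.1 x) := rfl

theorem sHomMap_add {M N : Type u} [AddCommGroup M] [AddCommGroup N] [LMod R M]
    [LMod R N] (g : LinMap R M N) (α β : SHom R S P M) :
    sHomMap g (α + β) = sHomMap g α + sHomMap g β :=
  Subtype.ext (LinMap.ext (funext fun x =>
    show g.1 (α.1.1 x + β.1.1 x) = g.1 (α.1.1 x) + g.1 (β.1.1 x) from g.2.map_add _ _))

theorem sHomMap_smul {M N : Type u} [AddCommGroup M] [AddCommGroup N] [LMod R M]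
    [LMod R N] (g : LinMap R M N) (s : S) (α : SHom R S P M) :
    sHomMap g (s • α) = s • sHomMap g α :=
  Subtype.ext (LinMap.ext (funext fun x => rfl))

/-- `SHom_R(P,g)` as a homomorphism of `S`-modules. -/
def sHomLin {M N : Type u} [AddCommGroup M] [AddCommGroup N] [LMod R M] [LMod R N]
    (g : LinMap R M N) : LinMap S (SHom R S P M) (SHom R S P N) :=
  ⟨sHomMap g, ⟨sHomMap_add g, fun s α => sHomMap_smul g s α⟩⟩

variable (R S P)

/-- The functor `SHom_R(P,−)` from unitary left `R`-modules to unitary left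
`S`-modules. -/
def sHomF [HasLocalUnits S] : UMod.{u, u} R ⥤ UMod.{u, u} S where
  obj M := ⟨SHom R S P M.carrier, umax_unitary⟩
  map g := sHomLin g
  map_id M := LinMap.ext (funext fun α => Subtype.ext (LinMap.ext (funext fun x => rfl)))
  map_comp f g := LinMap.ext (funext fun α => Subtype.ext (LinMap.ext (funext fun x => rfl)))

/-- `G_P = SHom_R(P,R)`, an `S`-`R`-bimodule. -/
abbrev GP : Type u := ↥(umax S (LinMap R P R))

/-- `RHom_S(G_P, N) = R·Hom_S(G_P, N)`, as a type. -/
abbrev RHomG (N : Type u) [AddCommGroup N] [LMod S N] : Type u :=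
  ↥(umax R (LinMap S (GP R S P) N))

variable {R S P}

/-- The action of `RHom_S(G_P,−)` on a homomorphism of `S`-modules. -/
def rHomGMap {N N' : Type u} [AddCommGroup N] [AddCommGroup N'] [LMod S N] [LMod S N']
    (g : LinMap S N N') (α : RHomG R S P N) : RHomG R S P N' :=
  ⟨⟨fun β => g.1 (α.1.1 β),
    ⟨fun x y => by rw [α.1.2.map_add, g.2.map_add],
     fun s x => by rw [α.1.2.map_smul, g.2.map_smul]⟩⟩,
   umax_mapsTo (C := R)
     (fun f => ⟨fun β => g.1 (f.1 β),
       ⟨fun x y => by rw [f.2.map_add, g.2.map_add],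
        fun s x => by rw [f.2.map_smul, g.2.map_smul]⟩⟩)
     (fun f f' => LinMap.ext (funext fun β => g.2.map_add _ _))
     (fun r f => LinMap.ext rfl) α.2⟩

variable (R S P)

/-- The functor `RHom_S(G_P,−)` from unitary left `S`-modules to unitary left
`R`-modules. -/
def rHomGF [HasLocalUnits R] : UMod.{u, u} S ⥤ UMod.{u, u} R where
  obj N := ⟨RHomG R S P N.carrier, umax_unitary⟩
  map g := ⟨rHomGMap g,
    ⟨fun α β => Subtype.ext (LinMap.ext (funext fun x =>
       show g.1 (α.1.1 x + β.1.1 x) = g.1 (α.1.1 x) + g.1 (β.1.1 x) from g.2.map_add _ _)),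
     fun r α => Subtype.ext (LinMap.ext (funext fun x => rfl))⟩⟩
  map_id N := LinMap.ext (funext fun α => Subtype.ext (LinMap.ext (funext fun x => rfl)))
  map_comp f g := LinMap.ext (funext fun α => Subtype.ext (LinMap.ext (funext fun x => rfl)))

variable {R S P}

/-- The inner component of the evaluation map `γ`: for `n ∈ N` and
`β ∈ Hom_R(P,R)`, the homomorphism `P → N`, `x ↦ (x)β·n`. -/
def gammaInner {N : Type u} [AddCommGroup N] [LMod R N] (n : N) (β : LinMap R P R) :
    LinMap R P N :=
  ⟨fun x => (β.1 x) • n,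
   ⟨fun x y => by rw [β.2.map_add, LMod.add_smul'],
    fun r x => by rw [β.2.map_smul, NonUnitalRing.smul_def, LMod.mul_smul']⟩⟩

theorem gammaInner_mem {N : Type u} [AddCommGroup N] [LMod R N] (n : N)
    {β : LinMap R P R} (hβ : β ∈ umax S (LinMap R P R)) :
    gammaInner n β ∈ umax S (LinMap R P N) :=
  umax_mapsTo (C := S) (fun β => gammaInner n β)
    (fun β β' => LinMap.ext (funext fun x => LMod.add_smul' _ _ _))
    (fun s β => LinMap.ext rfl) hβ

variable (R S P)

/-- The evaluation map `γ_N : N → RHom_S(G_P, SHom_R(P,N))` (before checking that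
its values lie in the unitary part `R·Hom_S(G_P, SHom_R(P,N))`):
`n ↦ (β ↦ (x ↦ (x)β·n))`. -/
def gammaFun (N : Type u) [AddCommGroup N] [LMod R N] (n : N) :
    LinMap S (GP R S P) (SHom R S P N) :=
  ⟨fun β => ⟨gammaInner n β.1, gammaInner_mem n β.2⟩,
   ⟨fun β β' => Subtype.ext (LinMap.ext (funext fun x => LMod.add_smul' _ _ _)),
    fun s β => Subtype.ext (LinMap.ext rfl)⟩⟩

/-- The `s`-trace `sTr(P,M) = Σ_{g ∈ SHom_R(P,M)} Im g` of `P` in `M`. -/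
def sTrSub (M : Type u) [AddCommGroup M] [LMod R M] : AddSubgroup M :=
  AddSubgroup.closure {m : M | ∃ f : LinMap R P M, f ∈ umax S (LinMap R P M) ∧ ∃ x : P, m = f.1 x}

/-- `st_P(M) = 0`: the only `R`-submodule `K ⊆ M` with `SHom_R(P,K) = 0` is the
zero submodule (equivalently, the sum of all such submodules is zero). -/
def stPZero (M : Type u) [AddCommGroup M] [LMod R M] : Prop :=
  ∀ K : AddSubgroup M, (∀ (r : R) (x : M), x ∈ K → r • x ∈ K) →
    (∀ (s : S) (f : LinMap R P M), (∀ x : P, f.1 x ∈ K) → s • f = 0) →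
    ∀ m ∈ K, m = 0

/-- `SHom_R(P,X) = 0`. -/
def sHomZero (X : Type u) [AddCommGroup X] [LMod R X] : Prop :=
  ∀ f : LinMap R P X, f ∈ umax S (LinMap R P X) → f = 0

end shom
/-! ### Bimodules, dual hom functors, reflexivity, Morita duality bimodules,
finiteness conditions -/

section bimod

variable (R S : Type u) [NonUnitalRing R] [NonUnitalRing S]

/-- A bundled `R`-`S`-bimodule over non-unital rings. -/
structure BimodLU : Type (u + 1) where
  carrier : Type u
  [grp : AddCommGroup carrier]
  [lmod : LMod R carrier]
  [rmod : LMod Sᵐᵒᵖ carrier]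
  [comm : SMulCommClass R Sᵐᵒᵖ carrier]
  [comm' : SMulCommClass Sᵐᵒᵖ R carrier]

attribute [instance] BimodLU.grp BimodLU.lmod BimodLU.rmod BimodLU.comm BimodLU.comm'

variable (U : Type u) [AddCommGroup U] [LMod R U] [LMod Sᵐᵒᵖ U] [SMulCommClass R Sᵐᵒᵖ U]
  [SMulCommClass Sᵐᵒᵖ R U]

/-- The canonical map `μ : S → End_R(U)`, `s ↦ (x ↦ x·s)`. -/
def muMap (s : S) : LinMap R U U :=
  ⟨fun x => op s • x,
   ⟨fun x y => LMod.smul_add' (op s) x y, fun r x => (smul_comm r (op s) x).symm⟩⟩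

/-- The canonical map `λ : R → End_S(U)`, `r ↦ (x ↦ r·x)`. -/
def lambdaMap (r : R) : LinMap Sᵐᵒᵖ U U :=
  ⟨fun x => r • x,
   ⟨fun x y => LMod.smul_add' r x y, fun s x => smul_comm r s x⟩⟩

/-- `Hom_R(M,U)S`, the largest unitary right `S`-submodule of `Hom_R(M,U)`,
as a type (a right `S`-module, i.e. a left `Sᵐᵒᵖ`-module). -/
abbrev DHomL (M : Type u) [AddCommGroup M] [LMod R M] : Type u :=
  ↥(umax Sᵐᵒᵖ (LinMap R M U))

/-- `RHom_S(N,U)`, the largest unitary left `R`-submodule of `Hom_S(N,U)`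
for a right `S`-module `N`, as a type. -/
abbrev DHomR (N : Type u) [AddCommGroup N] [LMod Sᵐᵒᵖ N] : Type u :=
  ↥(umax R (LinMap Sᵐᵒᵖ N U))

variable {R S U}

/-- Action of the contravariant functor `Hom_R(−,U)S` on morphisms
(precomposition). -/
def dHomLMap {M N : Type u} [AddCommGroup M] [AddCommGroup N] [LMod R M] [LMod R N]
    (f : LinMap R M N) (α : DHomL R S U N) : DHomL R S U M :=
  ⟨⟨fun x => α.1.1 (f.1 x),
    ⟨fun x y => by rw [f.2.map_add, α.1.2.map_add],
     fun r x => by rw [f.2.map_smul, α.1.2.map_smul]⟩⟩,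
   umax_mapsTo (C := Sᵐᵒᵖ)
     (fun g => ⟨fun x => g.1 (f.1 x),
       ⟨fun x y => by rw [f.2.map_add, g.2.map_add],
        fun r x => by rw [f.2.map_smul, g.2.map_smul]⟩⟩)
     (fun g g' => LinMap.ext rfl) (fun s g => LinMap.ext rfl) α.2⟩

/-- Action of the contravariant functor `RHom_S(−,U)` on morphisms
(precomposition). -/
def dHomRMap {M N : Type u} [AddCommGroup M] [AddCommGroup N] [LMod Sᵐᵒᵖ M]
    [LMod Sᵐᵒᵖ N] (f : LinMap Sᵐᵒᵖ M N) (α : DHomR R S U N) : DHomR R S U M :=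
  ⟨⟨fun x => α.1.1 (f.1 x),
    ⟨fun x y => by rw [f.2.map_add, α.1.2.map_add],
     fun s x => by rw [f.2.map_smul, α.1.2.map_smul]⟩⟩,
   umax_mapsTo (C := R)
     (fun g => ⟨fun x => g.1 (f.1 x),
       ⟨fun x y => by rw [f.2.map_add, g.2.map_add],
        fun s x => by rw [f.2.map_smul, g.2.map_smul]⟩⟩)
     (fun g g' => LinMap.ext rfl) (fun r g => LinMap.ext rfl) α.2⟩

variable (R S U)

/-- The contravariant functor `Hom_R(−,U)S` from unitary left `R`-modules to
unitary right `S`-modules. -/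
def dualL [HasLocalUnits S] : (UMod.{u, u} R)ᵒᵖ ⥤ UMod.{u, u} Sᵐᵒᵖ where
  obj M := ⟨DHomL R S U M.unop.carrier, umax_unitary⟩
  map f := ⟨dHomLMap f.unop,
    ⟨fun α β => Subtype.ext (LinMap.ext (funext fun x => rfl)),
     fun s α => Subtype.ext (LinMap.ext (funext fun x => rfl))⟩⟩
  map_id M := LinMap.ext (funext fun α => Subtype.ext (LinMap.ext (funext fun x => rfl)))
  map_comp f g := LinMap.ext (funext fun α => Subtype.ext (LinMap.ext (funext fun x => rfl)))

/-- The contravariant functor `RHom_S(−,U)` from unitary right `S`-modules to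
unitary left `R`-modules. -/
def dualR [HasLocalUnits R] : (UMod.{u, u} Sᵐᵒᵖ)ᵒᵖ ⥤ UMod.{u, u} R where
  obj N := ⟨DHomR R S U N.unop.carrier, umax_unitary⟩
  map f := ⟨dHomRMap f.unop,
    ⟨fun α β => Subtype.ext (LinMap.ext (funext fun x => rfl)),
     fun r α => Subtype.ext (LinMap.ext (funext fun x => rfl))⟩⟩
  map_id N := LinMap.ext (funext fun α => Subtype.ext (LinMap.ext (funext fun x => rfl)))
  map_comp f g := LinMap.ext (funext fun α => Subtype.ext (LinMap.ext (funext fun x => rfl)))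

/-- The underlying function of the evaluation map
`φ_X : X → RHom_S(Hom_R(X,U)S, U)`, `(x)φ_X : β ↦ (x)β`. -/
def evalFunL (X : Type u) [AddCommGroup X] [LMod R X] (x : X) :
    LinMap Sᵐᵒᵖ (DHomL R S U X) U :=
  ⟨fun β => β.1.1 x, ⟨fun β β' => rfl, fun s β => rfl⟩⟩

/-- A unitary left `R`-module `X` is `U`-reflexive: the evaluation map
`φ_X : X → RHom_S(Hom_R(X,U)S, U)` is an isomorphism. -/
def IsLReflexive (X : Type u) [AddCommGroup X] [LMod R X] : Prop :=
  ∃ h : ∀ x : X, evalFunL R S U X x ∈ umax R (LinMap Sᵐᵒᵖ (DHomL R S U X) U),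
    Function.Bijective (fun x : X => (⟨evalFunL R S U X x, h x⟩ : DHomR R S U (DHomL R S U X)))

/-- The underlying function of the evaluation map
`ψ_Y : Y → Hom_R(RHom_S(Y,U),U)S`, `ψ_Y(y) : α ↦ α(y)`. -/
def evalFunR (Y : Type u) [AddCommGroup Y] [LMod Sᵐᵒᵖ Y] (y : Y) :
    LinMap R (DHomR R S U Y) U :=
  ⟨fun α => α.1.1 y, ⟨fun α α' => rfl, fun r α => rfl⟩⟩

/-- A unitary right `S`-module `Y` is `U`-reflexive: the evaluation map
`ψ_Y : Y → Hom_R(RHom_S(Y,U),U)S` is an isomorphism. -/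
def IsRReflexive (Y : Type u) [AddCommGroup Y] [LMod Sᵐᵒᵖ Y] : Prop :=
  ∃ h : ∀ y : Y, evalFunR R S U Y y ∈ umax Sᵐᵒᵖ (LinMap R (DHomR R S U Y) U),
    Function.Bijective (fun y : Y => (⟨evalFunR R S U Y y, h y⟩ : DHomL R S U (DHomR R S U Y)))

/-- Properties (I) and (II) of a Morita duality bimodule: `U` is the direct
limit of a split direct system of finitely generated injective unitary left
`R`-modules whose members form a cogenerating set for the category of unitary
left `R`-modules, and `μ : S → End_R(U)` is a monomorphism whose image is
exactly the set of endomorphisms factoring through one of the induced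
projections. -/
def SatisfiesI_II : Prop :=
  ∃ (ι : Type u) (rel : ι → ι → Prop),
    (∀ i, rel i i) ∧ (∀ {i j k}, rel i j → rel j k → rel i k) ∧
    Nonempty ι ∧ (∀ i j, ∃ k, rel i k ∧ rel j k) ∧
    ∃ (D : SplitSystem.{u, u} R ι rel) (c : LimitCocone R D U)
      (proj : ∀ i, LinMap R U (D.obj i).carrier),
      (∀ i, IsFG R (D.obj i).carrier ∧ CategoryTheory.Injective (D.obj i)) ∧
      IsCogenSet R {M | ∃ i, M = D.obj i} ∧
      (∀ i (x : (D.obj i).carrier), (proj i).1 ((c.incl i).1 x) = x) ∧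
      (∀ {i j} (h : rel i j) (x : U), (D.split h).1 ((proj j).1 x) = (proj i).1 x) ∧
      Function.Injective (muMap R S U) ∧
      Set.range (muMap R S U) =
        {g : LinMap R U U | ∃ (i : ι) (γ : LinMap R (D.obj i).carrier U),
          g.1 = fun x => γ.1 ((proj i).1 x)}

/-- Properties (III) and (IV) of a Morita duality bimodule (the right-module
side, dual to (I) and (II)). -/
def SatisfiesIII_IV : Prop :=
  ∃ (ι : Type u) (rel : ι → ι → Prop),
    (∀ i, rel i i) ∧ (∀ {i j k}, rel i j → rel j k → rel i k) ∧
    Nonempty ι ∧ (∀ i j, ∃ k, rel i k ∧ rel j k) ∧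
    ∃ (D : SplitSystem.{u, u} Sᵐᵒᵖ ι rel) (c : LimitCocone Sᵐᵒᵖ D U)
      (proj : ∀ i, LinMap Sᵐᵒᵖ U (D.obj i).carrier),
      (∀ i, IsFG Sᵐᵒᵖ (D.obj i).carrier ∧ CategoryTheory.Injective (D.obj i)) ∧
      IsCogenSet Sᵐᵒᵖ {M | ∃ i, M = D.obj i} ∧
      (∀ i (x : (D.obj i).carrier), (proj i).1 ((c.incl i).1 x) = x) ∧
      (∀ {i j} (h : rel i j) (x : U), (D.split h).1 ((proj j).1 x) = (proj i).1 x) ∧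
      Function.Injective (lambdaMap R S U) ∧
      Set.range (lambdaMap R S U) =
        {g : LinMap Sᵐᵒᵖ U U | ∃ (i : ι) (γ : LinMap Sᵐᵒᵖ (D.obj i).carrier U),
          g.1 = fun x => γ.1 ((proj i).1 x)}

/-- A Morita duality `R`-`S`-bimodule. -/
def IsMoritaDualityBimod : Prop :=
  IsUnitary R U ∧ IsUnitary Sᵐᵒᵖ U ∧ SatisfiesI_II R S U ∧ SatisfiesIII_IV R S U

end bimod

section cats

variable (R : Type u) [NonUnitalRing R]

/-- The category of finitely generated unitary left `R`-modules. -/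
abbrev FGMod := CategoryTheory.ObjectProperty.FullSubcategory (fun M : UMod.{u, u} R => IsFG R M.carrier)

/-- The category of finitely generated injective unitary left `R`-modules. -/
abbrev InjFGMod := CategoryTheory.ObjectProperty.FullSubcategory
  (fun M : UMod.{u, u} R => IsFG R M.carrier ∧ CategoryTheory.Injective M)

/-- The category of finitely generated projective unitary left `R`-modules. -/
abbrev ProjFGMod := CategoryTheory.ObjectProperty.FullSubcategory
  (fun M : UMod.{u, u} R => IsFG R M.carrier ∧ CategoryTheory.Projective M)

/-- There is a duality (an additive contravariant equivalence) between the
categories of finitely generated unitary left `R`-modules and finitely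
generated unitary right `S`-modules. -/
def ExistsFGDuality (R S : Type u) [NonUnitalRing R] [NonUnitalRing S] : Prop :=
  ∃ F : (FGMod R)ᵒᵖ ⥤ FGMod Sᵐᵒᵖ, F.Additive ∧ F.IsEquivalence

/-- Bundled ring with local units. -/
structure RingLU : Type (u + 1) where
  carrier : Type u
  [ring : NonUnitalRing carrier]
  [lu : HasLocalUnits carrier]

attribute [instance] RingLU.ring RingLU.lu

/-- A ring with local units is left Morita if there is a ring `R'` with local
units and a duality from finitely generated unitary left `R`-modules to
finitely generated unitary right `R'`-modules. -/
def IsLeftMorita : Prop :=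
  ∃ R' : RingLU.{u}, ExistsFGDuality R R'.carrier

/-- `R` is left locally finite: every finitely generated unitary left
`R`-module has finite length (equivalently, the lengths of chains of
submodules of such a module are bounded). -/
def IsLeftLocallyFinite : Prop :=
  ∀ (M : Type u) [AddCommGroup M] [LMod R M], IsUnitary R M → IsFG R M →
    ∃ n : ℕ, ∀ c : Fin (n + 1) → AddSubgroup M,
      (∀ i (r : R) x, x ∈ c i → r • x ∈ c i) →
      ¬(∀ i : Fin n, c i.castSucc < c i.succ)

/-- `R` is left locally noetherian: every finitely generated unitary left
`R`-module is noetherian. -/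
def IsLeftLocallyNoetherian : Prop :=
  ∀ (M : Type u) [AddCommGroup M] [LMod R M], IsUnitary R M → IsFG R M →
    ∀ c : ℕ → AddSubgroup M, (∀ i (r : R) x, x ∈ c i → r • x ∈ c i) →
      (∀ i, c i ≤ c (i + 1)) → ∃ n, ∀ m, n ≤ m → c m = c n

end cats

section principal

variable (R : Type u) [NonUnitalRing R]

/-- The principal left ideal `Re` of a non-unital ring, for an element `e`. -/
def principalLeft (e : R) : AddSubgroup R where
  carrier := {y : R | ∃ r : R, y = r * e}
  add_mem' := by
    rintro a b ⟨r, hr⟩ ⟨s, hs⟩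
    exact ⟨r + s, by rw [hr, hs, add_mul]⟩
  zero_mem' := ⟨0, by rw [zero_mul]⟩
  neg_mem' := by
    rintro a ⟨r, hr⟩
    exact ⟨-r, by rw [hr, neg_mul]⟩

instance (e : R) : LMod R ↥(principalLeft R e) where
  smul r y := ⟨r * y.1, by obtain ⟨s, hs⟩ := y.2; exact ⟨r * s, by rw [hs, mul_assoc]⟩⟩
  smul_add' r m n := Subtype.ext (mul_add r m.1 n.1)
  add_smul' r s m := Subtype.ext (add_mul r s m.1)
  mul_smul' r s m := Subtype.ext (mul_assoc r s m.1)

/-- The principal right ideal `fS` of a non-unital ring, as a right module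
(left module over the opposite ring). -/
def principalRight (f : R) : AddSubgroup R where
  carrier := {y : R | ∃ s : R, y = f * s}
  add_mem' := by
    rintro a b ⟨r, hr⟩ ⟨s, hs⟩
    exact ⟨r + s, by rw [hr, hs, mul_add]⟩
  zero_mem' := ⟨0, by rw [mul_zero]⟩
  neg_mem' := by
    rintro a ⟨r, hr⟩
    exact ⟨-r, by rw [hr, mul_neg]⟩

instance (f : R) : LMod Rᵐᵒᵖ ↥(principalRight R f) where
  smul s y := ⟨y.1 * s.unop, by
    obtain ⟨t, ht⟩ := y.2; exact ⟨t * s.unop, by rw [ht, mul_assoc]⟩⟩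
  smul_add' s m n := Subtype.ext (add_mul m.1 n.1 s.unop)
  add_smul' s t m := Subtype.ext (mul_add m.1 s.unop t.unop)
  mul_smul' s t m := Subtype.ext (mul_assoc m.1 t.unop s.unop).symm

end principal

section restr

variable (R S : Type u) [NonUnitalRing R] [NonUnitalRing S] [HasLocalUnits R] [HasLocalUnits S]
variable (U : Type u) [AddCommGroup U] [LMod R U] [LMod Sᵐᵒᵖ U] [SMulCommClass R Sᵐᵒᵖ U]
  [SMulCommClass Sᵐᵒᵖ R U]

/-- The restriction of the contravariant functor `Hom_R(−,U)S` to finitely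
generated modules, given that it preserves finite generation. -/
def dualLRestr (hFG : ∀ X : UMod.{u, u} R, IsFG R X.carrier →
    IsFG Sᵐᵒᵖ ((dualL R S U).obj (Opposite.op X)).carrier) :
    (FGMod R)ᵒᵖ ⥤ FGMod Sᵐᵒᵖ :=
  CategoryTheory.ObjectProperty.lift _
    ((CategoryTheory.ObjectProperty.ι _).op ⋙ dualL R S U)
    (fun X => hFG X.unop.obj X.unop.property)

/-- The restriction of the contravariant functor `RHom_S(−,U)` to finitely
generated modules, given that it preserves finite generation. -/
def dualRRestr (hFG : ∀ Y : UMod.{u, u} Sᵐᵒᵖ, IsFG Sᵐᵒᵖ Y.carrier →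
    IsFG R ((dualR R S U).obj (Opposite.op Y)).carrier) :
    (FGMod Sᵐᵒᵖ)ᵒᵖ ⥤ FGMod R :=
  CategoryTheory.ObjectProperty.lift _
    ((CategoryTheory.ObjectProperty.ι _).op ⋙ dualR R S U)
    (fun Y => hFG Y.unop.obj Y.unop.property)

end restr
/-! ### Direct sums of modules over non-unital rings -/

section dfinsupp

variable {R : Type u} [NonUnitalRing R] {ι : Type v} {β : ι → Type w}
  [∀ i, AddCommGroup (β i)] [∀ i, LMod R (β i)]

/-- Pointwise scalar action on a direct sum. -/
def dfinsuppSMul (r : R) (f : Π₀ i, β i) : Π₀ i, β i :=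
  f.mapRange (fun _ x => r • x) (fun _ => LMod.smul_zero' r)

theorem dfinsuppSMul_apply (r : R) (f : Π₀ i, β i) (i : ι) :
    dfinsuppSMul r f i = r • f i := DFinsupp.mapRange_apply _ _ f i

instance DFinsupp.instLMod : LMod R (Π₀ i, β i) where
  smul := dfinsuppSMul
  smul_add' r f g := by
    ext i
    show dfinsuppSMul r (f + g) i = (dfinsuppSMul r f + dfinsuppSMul r g) i
    rw [DFinsupp.add_apply, dfinsuppSMul_apply, dfinsuppSMul_apply, dfinsuppSMul_apply,
      DFinsupp.add_apply]
    exact LMod.smul_add' r (f i) (g i)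
  add_smul' r s f := by
    ext i
    show dfinsuppSMul (r + s) f i = (dfinsuppSMul r f + dfinsuppSMul s f) i
    rw [DFinsupp.add_apply, dfinsuppSMul_apply, dfinsuppSMul_apply, dfinsuppSMul_apply]
    exact LMod.add_smul' r s (f i)
  mul_smul' r s f := by
    ext i
    show dfinsuppSMul (r * s) f i = dfinsuppSMul r (dfinsuppSMul s f) i
    rw [dfinsuppSMul_apply, dfinsuppSMul_apply, dfinsuppSMul_apply]
    exact LMod.mul_smul' r s (f i)

@[simp] theorem DFinsupp.lmod_smul_apply (r : R) (f : Π₀ i, β i) (i : ι) :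
    (r • f) i = r • f i := dfinsuppSMul_apply r f i

end dfinsupp
/-! ### Miscellaneous helpers: submodule stability, `Pf`, traces, sums -/

section extra

variable {R : Type u} [NonUnitalRing R] {M : Type v} [AddCommGroup M] [LMod R M]

theorem closure_smul_stable {s : Set M}
    (h : ∀ (r : R) (x : M), x ∈ s → r • x ∈ AddSubgroup.closure s) (r : R) {x : M}
    (hx : x ∈ AddSubgroup.closure s) : r • x ∈ AddSubgroup.closure s := by
  induction hx using AddSubgroup.closure_induction with
  | mem y hy => exact h r y hy
  | zero => rw [LMod.smul_zero']; exact AddSubgroup.zero_mem _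
  | add y z hy hz ihy ihz => rw [LMod.smul_add']; exact AddSubgroup.add_mem _ ihy ihz
  | neg y hy ihy => rw [LMod.smul_neg']; exact AddSubgroup.neg_mem _ ihy

end extra

section pe

variable (R S : Type u) [NonUnitalRing R] [NonUnitalRing S]
variable (P : Type u) [AddCommGroup P] [LMod R P] [LMod Sᵐᵒᵖ P] [SMulCommClass R Sᵐᵒᵖ P]

/-- The submodule `Pf = {x·f | x ∈ P}` of `P`, for `f ∈ S`. -/
def peSub (f : S) : AddSubgroup P where
  carrier := Set.range (fun x : P => (op f : Sᵐᵒᵖ) • x)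
  add_mem' := by
    rintro a b ⟨x, rfl⟩ ⟨y, rfl⟩
    exact ⟨x + y, LMod.smul_add' (op f) x y⟩
  zero_mem' := ⟨0, LMod.smul_zero' _⟩
  neg_mem' := by
    rintro a ⟨x, rfl⟩
    exact ⟨-x, LMod.smul_neg' (op f) x⟩

instance (f : S) : LMod R ↥(peSub S P f) where
  smul r y := ⟨r • y.1, by
    obtain ⟨x, hx⟩ := y.2
    exact ⟨r • x, by rw [← hx, smul_comm]⟩⟩
  smul_add' r m n := Subtype.ext (LMod.smul_add' r m.1 n.1)
  add_smul' r s m := Subtype.ext (LMod.add_smul' r s m.1)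
  mul_smul' r s m := Subtype.ext (LMod.mul_smul' r s m.1)

variable {R S P} in
theorem sTrSub_smul_stable {M : Type u} [AddCommGroup M] [LMod R M] (r : R) {m : M}
    (hm : m ∈ sTrSub R S P M) : r • m ∈ sTrSub R S P M := by
  refine closure_smul_stable (fun r' x hx => ?_) r hm
  obtain ⟨g, hg, y, rfl⟩ := hx
  exact AddSubgroup.subset_closure ⟨g, hg, r' • y, (g.2.map_smul r' y).symm⟩

instance (M : Type u) [AddCommGroup M] [LMod R M] : LMod R ↥(sTrSub R S P M) where
  smul r y := ⟨r • y.1, sTrSub_smul_stable r y.2⟩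
  smul_add' r m n := Subtype.ext (LMod.smul_add' r m.1 n.1)
  add_smul' r s m := Subtype.ext (LMod.add_smul' r s m.1)
  mul_smul' r s m := Subtype.ext (LMod.mul_smul' r s m.1)

end pe

section sum

/-- Summation over a direct sum against a family of additive maps
(the canonical map `⊕_I M_i → N`). -/
noncomputable def dfinsuppSum {ι : Type u} {β : ι → Type v} [∀ i, AddCommGroup (β i)]
    {γ : Type w} [AddCommGroup γ] (f : ∀ i, β i →+ γ) (x : Π₀ i, β i) : γ :=
  letI := Classical.decEq ι
  DFinsupp.sumAddHom f x

end sum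

/-!
An element `x = φ_j y` of `P` is sent by `ψ_i` to `ψ_{ki} φ_{jk} y` for any `k` above `i` and `j`;
this does not depend on the choices, because two representatives of `x` agree at some later
stage and the splittings are compatible. Since `ψ_i φ_i = 1`, `Ω_i(a) = φ_i a ψ_i` embeds
`End_R(P_i)` into `End_R(P)` as a ring, compatibly with the `Ω_{ij}`. If `g = γ ψ_i ∈ S`, then
`γ(P_i)` is finitely generated, so it lies in some `φ_k(P_k)` with `i ≤ k`, and then
`g = Ω_k(ψ_k g φ_k)`. Thus `S` is the directed union of the injective images of the rings
`End_R(P_i)`, which gives it the universal property of their direct limit.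
-/

namespace LinMap

variable {R : Type u} [NonUnitalRing R] {M N K : Type*} [AddCommGroup M] [AddCommGroup N]
  [AddCommGroup K] [LMod R M] [LMod R N] [LMod R K]

def comp (g : LinMap R N K) (f : LinMap R M N) : LinMap R M K :=
  ⟨fun x => g.1 (f.1 x),
    ⟨fun x y => by rw [f.2.map_add, g.2.map_add], fun r x => by rw [f.2.map_smul, g.2.map_smul]⟩⟩

@[simp] theorem comp_apply (g : LinMap R N K) (f : LinMap R M N) (x : M) :
    (g.comp f).1 x = g.1 (f.1 x) := rfl

def toAddMonoidHom (f : LinMap R M N) : M →+ N := AddMonoidHom.mk' f.1 f.2.map_add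

@[simp] theorem coe_toAddMonoidHom (f : LinMap R M N) : ⇑f.toAddMonoidHom = f.1 := rfl

theorem map_sub (f : LinMap R M N) (x y : M) : f.1 (x - y) = f.1 x - f.1 y :=
  _root_.map_sub f.toAddMonoidHom x y

theorem smul_mem_range (f : LinMap R M N) (r : R) {y : N} (hy : y ∈ f.toAddMonoidHom.range) :
    r • y ∈ f.toAddMonoidHom.range := by
  obtain ⟨x, rfl⟩ := hy
  exact ⟨r • x, f.2.map_smul r x⟩

theorem mem_lspan_image (f : LinMap R M N) {X : Set M} {x : M} (hx : x ∈ lspan R X) :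
    f.1 x ∈ lspan R (f.1 '' X) := by
  have hle : (lspan R X).map f.toAddMonoidHom ≤ lspan R (f.1 '' X) := by
    rw [lspan, AddMonoidHom.map_closure]
    refine AddSubgroup.closure_mono ?_
    rintro _ ⟨x, hx | ⟨r, y, hy, rfl⟩, rfl⟩
    · exact Or.inl ⟨x, hx, rfl⟩
    · exact Or.inr ⟨r, f.1 y, ⟨y, hy, rfl⟩, f.2.map_smul r y⟩
  exact hle ⟨x, hx, rfl⟩

theorem apply_mem_closure_smul_of_isUnitary (hM : IsUnitary R M) (f : LinMap R M N) (x : M) :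
    f.1 x ∈ AddSubgroup.closure {y : N | ∃ (r : R) (n : N), y = r • n} := by
  have hle : (AddSubgroup.closure {y : M | ∃ (r : R) (n : M), y = r • n}).map f.toAddMonoidHom ≤
      AddSubgroup.closure {y : N | ∃ (r : R) (n : N), y = r • n} := by
    rw [AddMonoidHom.map_closure]
    refine AddSubgroup.closure_mono ?_
    rintro _ ⟨_, ⟨r, n, rfl⟩, rfl⟩
    exact ⟨r, f.1 n, f.2.map_smul r n⟩
  exact hle ⟨x, hM x, rfl⟩

end LinMap

section lspan

variable {R : Type u} [NonUnitalRing R] {M N : Type*} [AddCommGroup M] [AddCommGroup N]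
  [LMod R M] [LMod R N]

theorem lspan_le {X : Set M} {H : AddSubgroup M} (hX : X ⊆ H)
    (hH : ∀ (r : R) (x : M), x ∈ H → r • x ∈ H) : lspan R X ≤ H := by
  refine (AddSubgroup.closure_le H).2 (Set.union_subset hX ?_)
  rintro _ ⟨r, x, hx, rfl⟩
  exact hH r x (hX hx)

theorem IsFG.isFGSet_range (hM : IsFG R M) (f : LinMap R M N) : IsFGSet R (Set.range f.1) := by
  classical
  obtain ⟨t, ht⟩ := hM
  refine ⟨t.image f.1, by rw [Finset.coe_image]; exact Set.image_subset_range _ _, ?_⟩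
  rintro _ ⟨m, rfl⟩
  rw [Finset.coe_image]
  exact f.mem_lspan_image (ht m)

end lspan

theorem existsUnique_lift_of_directed_union {ι : Type*} {rel : ι → ι → Prop} [IsDirected ι rel]
    {A : ι → Type*} [∀ i, NonUnitalRing (A i)] {S : Type*} [NonUnitalRing S]
    (f : ∀ {i j}, rel i j → A i → A j) (Ω : ∀ i, A i → S)
    (hΩ_add : ∀ i a b, Ω i (a + b) = Ω i a + Ω i b)
    (hΩ_mul : ∀ i a b, Ω i (a * b) = Ω i a * Ω i b)
    (hΩ_f : ∀ {i j} (h : rel i j) a, Ω j (f h a) = Ω i a)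
    (hΩ_inj : ∀ i, Function.Injective (Ω i)) (hΩ_surj : ∀ s, ∃ i a, Ω i a = s)
    (T : Type*) [NonUnitalRing T] (θ : ∀ i, A i → T)
    (hθ_add : ∀ i a b, θ i (a + b) = θ i a + θ i b)
    (hθ_mul : ∀ i a b, θ i (a * b) = θ i a * θ i b)
    (hθ_f : ∀ {i j} (h : rel i j) a, θ j (f h a) = θ i a) :
    ∃! τ : S → T, ((∀ a b, τ (a + b) = τ a + τ b) ∧ (∀ a b, τ (a * b) = τ a * τ b)) ∧
      ∀ i a, τ (Ω i a) = θ i a := by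
  have hθ_eq : ∀ {i j a b}, Ω i a = Ω j b → θ i a = θ j b := by
    intro i j a b hab
    obtain ⟨l, hil, hjl⟩ := directed_of rel i j
    have hfab : f hil a = f hjl b := hΩ_inj l (by rw [hΩ_f, hΩ_f, hab])
    rw [← hθ_f hil, ← hθ_f hjl, hfab]
  have hcommon : ∀ s s', ∃ l a b, Ω l a = s ∧ Ω l b = s' := by
    intro s s'
    obtain ⟨i, a, rfl⟩ := hΩ_surj s
    obtain ⟨j, b, rfl⟩ := hΩ_surj s'
    obtain ⟨l, hil, hjl⟩ := directed_of rel i j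
    exact ⟨l, f hil a, f hjl b, hΩ_f hil a, hΩ_f hjl b⟩
  choose idx elt helt using hΩ_surj
  have hτ : ∀ i a, θ (idx (Ω i a)) (elt (Ω i a)) = θ i a := fun i a => hθ_eq (helt _)
  refine ⟨fun s => θ (idx s) (elt s), ⟨⟨fun s s' => ?_, fun s s' => ?_⟩, hτ⟩, ?_⟩
  · obtain ⟨l, a, b, rfl, rfl⟩ := hcommon s s'
    dsimp only
    rw [← hΩ_add, hτ, hτ, hτ, hθ_add]
  · obtain ⟨l, a, b, rfl, rfl⟩ := hcommon s s'
    dsimp only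
    rw [← hΩ_mul, hτ, hτ, hτ, hθ_mul]
  · rintro τ ⟨-, hτΩ⟩
    funext s
    rw [← helt s, hτΩ, hτ]

section DirectLimit

variable {R : Type u} [NonUnitalRing R] {ι : Type w} {rel : ι → ι → Prop}

theorem SplitSystem.split_map_eq_of_rel [IsTrans ι rel] (D : SplitSystem.{u, v} R ι rel)
    {i j k m : ι} (hik : rel i k) (hjk : rel j k) (hkm : rel k m) (y : (D.obj j).carrier) :
    (D.split hik).1 ((D.map hjk).1 y) =
      (D.split (trans_of rel hik hkm)).1 ((D.map (trans_of rel hjk hkm)).1 y) := by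
  rw [← D.map_map hjk hkm, ← D.split_split hik hkm, D.split_map]

namespace LimitCocone

variable {D : SplitSystem.{u, v} R ι rel} {P : Type v} [AddCommGroup P] [LMod R P]
  (c : LimitCocone R D P)

theorem range_incl_subset {j k : ι} (h : rel j k) :
    Set.range (c.incl j).1 ⊆ Set.range (c.incl k).1 := by
  rintro _ ⟨y, rfl⟩
  exact ⟨_, c.compat h y⟩

theorem exists_map_eq_of_incl_eq [IsTrans ι rel] {j j' l : ι} (hjl : rel j l) (hj'l : rel j' l)
    {y : (D.obj j).carrier} {y' : (D.obj j').carrier} (h : (c.incl j).1 y = (c.incl j').1 y') :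
    ∃ n, ∃ hln : rel l n,
      (D.map (trans_of rel hjl hln)).1 y = (D.map (trans_of rel hj'l hln)).1 y' := by
  have hz : (c.incl l).1 ((D.map hjl).1 y - (D.map hj'l).1 y') = 0 := by
    rw [LinMap.map_sub, c.compat, c.compat, h, sub_self]
  obtain ⟨n, hln, hn⟩ := c.eventually_zero l _ hz
  rw [LinMap.map_sub, sub_eq_zero] at hn
  exact ⟨n, hln, by rw [← D.map_map hjl hln, ← D.map_map hj'l hln, hn]⟩

theorem isUnitary (c : LimitCocone R D P) : IsUnitary R P := fun x => by
  obtain ⟨i, y, rfl⟩ := c.exhaustive x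
  exact (c.incl i).apply_mem_closure_smul_of_isUnitary (D.obj i).unitary y

variable [IsTrans ι rel] [IsDirected ι rel]

theorem exists_rel_subset_range (s : Finset P) (i : ι) :
    ∃ k, rel i k ∧ ↑s ⊆ Set.range (c.incl k).1 := by
  classical
  induction s using Finset.induction_on with
  | empty =>
    obtain ⟨k, hik, -⟩ := directed_of rel i i
    exact ⟨k, hik, by simp⟩
  | insert x s _ ih =>
    obtain ⟨k, hik, hs⟩ := ih
    obtain ⟨j, y, rfl⟩ := c.exhaustive x
    obtain ⟨l, hkl, hjl⟩ := directed_of rel k j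
    refine ⟨l, trans_of rel hik hkl, ?_⟩
    rw [Finset.coe_insert, Set.insert_subset_iff]
    exact ⟨c.range_incl_subset hjl ⟨y, rfl⟩, hs.trans (c.range_incl_subset hkl)⟩

theorem split_map_eq_of_incl_eq {i j j' k k' : ι} (hik : rel i k) (hjk : rel j k)
    (hik' : rel i k') (hj'k' : rel j' k') {y : (D.obj j).carrier} {y' : (D.obj j').carrier}
    (h : (c.incl j).1 y = (c.incl j').1 y') :
    (D.split hik).1 ((D.map hjk).1 y) = (D.split hik').1 ((D.map hj'k').1 y') := by
  obtain ⟨l, hkl, hk'l⟩ := directed_of rel k k'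
  obtain ⟨n, hln, hn⟩ :=
    c.exists_map_eq_of_incl_eq (trans_of rel hjk hkl) (trans_of rel hj'k' hk'l) h
  rw [D.split_map_eq_of_rel hik hjk (trans_of rel hkl hln),
    D.split_map_eq_of_rel hik' hj'k' (trans_of rel hk'l hln), hn]

noncomputable def projFun (i : ι) (x : P) : (D.obj i).carrier :=
  have hk := directed_of rel i (c.exhaustive x).choose
  (D.split hk.choose_spec.1).1 ((D.map hk.choose_spec.2).1 (c.exhaustive x).choose_spec.choose)

theorem projFun_incl {i j k : ι} (hik : rel i k) (hjk : rel j k) (y : (D.obj j).carrier) :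
    c.projFun i ((c.incl j).1 y) = (D.split hik).1 ((D.map hjk).1 y) :=
  c.split_map_eq_of_incl_eq _ _ hik hjk (c.exhaustive _).choose_spec.choose_spec

theorem projFun_add (i : ι) (x x' : P) :
    c.projFun i (x + x') = c.projFun i x + c.projFun i x' := by
  obtain ⟨j, y, rfl⟩ := c.exhaustive x
  obtain ⟨j', y', rfl⟩ := c.exhaustive x'
  obtain ⟨k, hjk, hj'k⟩ := directed_of rel j j'
  obtain ⟨m, him, hkm⟩ := directed_of rel i k
  rw [← c.compat hjk y, ← c.compat hj'k y', ← (c.incl k).2.map_add, c.projFun_incl him hkm,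
    c.projFun_incl him hkm, c.projFun_incl him hkm, (D.map hkm).2.map_add,
    (D.split him).2.map_add]

theorem projFun_smul (i : ι) (r : R) (x : P) : c.projFun i (r • x) = r • c.projFun i x := by
  obtain ⟨j, y, rfl⟩ := c.exhaustive x
  obtain ⟨k, hik, hjk⟩ := directed_of rel i j
  rw [← (c.incl j).2.map_smul, c.projFun_incl hik hjk, c.projFun_incl hik hjk,
    (D.map hjk).2.map_smul, (D.split hik).2.map_smul]

noncomputable def proj (i : ι) : LinMap R P (D.obj i).carrier :=
  ⟨c.projFun i, ⟨c.projFun_add i, c.projFun_smul i⟩⟩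

theorem proj_incl (i : ι) (y : (D.obj i).carrier) : (c.proj i).1 ((c.incl i).1 y) = y := by
  obtain ⟨k, hik, -⟩ := directed_of rel i i
  exact (c.projFun_incl hik hik y).trans (D.split_map hik y)

theorem split_proj {i j : ι} (h : rel i j) (x : P) :
    (D.split h).1 ((c.proj j).1 x) = (c.proj i).1 x := by
  obtain ⟨l, y, rfl⟩ := c.exhaustive x
  obtain ⟨k, hjk, hlk⟩ := directed_of rel j l
  show (D.split h).1 (c.projFun j _) = c.projFun i _
  rw [c.projFun_incl hjk hlk, c.projFun_incl (trans_of rel h hjk) hlk, D.split_split]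

def FactorsThroughProj (g : LinMap R P P) : Prop :=
  ∃ (i : ι) (γ : LinMap R (D.obj i).carrier P), g.1 = fun x => γ.1 ((c.proj i).1 x)

theorem FactorsThroughProj.mul_right {s : LinMap R P P} (hs : c.FactorsThroughProj s)
    (g : LinMap R P P) : c.FactorsThroughProj (s * g) := by
  obtain ⟨i, γ, hsγ⟩ := hs
  exact ⟨i, g.comp γ, by funext x; simp [hsγ]⟩

noncomputable def factorSubring : NonUnitalSubring (LinMap R P P) where
  carrier := {g | c.FactorsThroughProj g}
  zero_mem' := ⟨(c.exhaustive 0).choose, 0, rfl⟩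
  add_mem' := by
    rintro g g' ⟨i, γ, hg⟩ ⟨j, γ', hg'⟩
    obtain ⟨k, hik, hjk⟩ := directed_of rel i j
    exact ⟨k, γ.comp (D.split hik) + γ'.comp (D.split hjk), by
      funext x; simp [hg, hg', c.split_proj]⟩
  neg_mem' := by
    rintro g ⟨i, γ, hg⟩
    exact ⟨i, -γ, by funext x; simp [hg]⟩
  mul_mem' := fun hs _ => FactorsThroughProj.mul_right c hs _

noncomputable def endMap (i : ι) (a : LinMap R (D.obj i).carrier (D.obj i).carrier) :
    LinMap R P P :=
  (c.incl i).comp (a.comp (c.proj i))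

noncomputable def endRestrict (k : ι) (s : LinMap R P P) :
    LinMap R (D.obj k).carrier (D.obj k).carrier :=
  (c.proj k).comp (s.comp (c.incl k))

theorem endRestrict_endMap (i : ι) (a : LinMap R (D.obj i).carrier (D.obj i).carrier) :
    c.endRestrict i (c.endMap i a) = a :=
  LinMap.ext (funext fun y => by simp [endRestrict, endMap, proj_incl])

theorem endMap_injective (i : ι) : Function.Injective (c.endMap i) :=
  Function.LeftInverse.injective (c.endRestrict_endMap i)

theorem endMap_add (i : ι) (a b : LinMap R (D.obj i).carrier (D.obj i).carrier) :
    c.endMap i (a + b) = c.endMap i a + c.endMap i b :=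
  LinMap.ext (funext fun x => (c.incl i).2.map_add _ _)

theorem endMap_mul (i : ι) (a b : LinMap R (D.obj i).carrier (D.obj i).carrier) :
    c.endMap i (a * b) = c.endMap i a * c.endMap i b :=
  LinMap.ext (funext fun x => by simp [endMap, proj_incl])

theorem endMap_endTrans {i j : ι} (h : rel i j)
    (a : LinMap R (D.obj i).carrier (D.obj i).carrier) :
    c.endMap j (D.endTrans h a) = c.endMap i a :=
  LinMap.ext (funext fun x => by
    show (c.incl j).1 ((D.map h).1 (a.1 ((D.split h).1 ((c.proj j).1 x)))) =
      (c.incl i).1 (a.1 ((c.proj i).1 x))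
    rw [c.compat, c.split_proj])

theorem endMap_mem (i : ι) (a : LinMap R (D.obj i).carrier (D.obj i).carrier) :
    c.endMap i a ∈ c.factorSubring :=
  ⟨i, (c.incl i).comp a, rfl⟩

theorem exists_endMap_eq (hfg : ∀ i, IsFG R (D.obj i).carrier) {s : LinMap R P P}
    (hs : s ∈ c.factorSubring) : ∃ k a, c.endMap k a = s := by
  classical
  obtain ⟨i, γ, hsγ⟩ := hs
  obtain ⟨t, ht⟩ := hfg i
  obtain ⟨k, hik, hk⟩ := c.exists_rel_subset_range (t.image γ.1) i
  have hγ : ∀ m, γ.1 m ∈ (c.incl k).toAddMonoidHom.range := fun m =>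
    lspan_le (by simpa using hk) (fun r _ => (c.incl k).smul_mem_range r)
      (γ.mem_lspan_image (ht m))
  have hproj : ∀ x, (c.proj i).1 ((c.incl k).1 ((c.proj k).1 x)) = (c.proj i).1 x := fun x => by
    rw [← c.split_proj hik, c.proj_incl, c.split_proj]
  refine ⟨k, c.endRestrict k s, LinMap.ext (funext fun x => ?_)⟩
  obtain ⟨y, hy⟩ := hγ ((c.proj i).1 x)
  simp only [endMap, endRestrict, LinMap.comp_apply, hsγ, hproj]
  rw [← hy, LinMap.coe_toAddMonoidHom, c.proj_incl]

theorem closure_factorSubring_mul :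
    ((AddSubgroup.closure
        {h : LinMap R P P | ∃ s ∈ c.factorSubring, ∃ g : LinMap R P P, h = s * g} :
      AddSubgroup (LinMap R P P)) : Set (LinMap R P P)) = c.factorSubring := by
  refine subset_antisymm ((AddSubgroup.closure_le c.factorSubring.toAddSubgroup).2 ?_) ?_
  · rintro _ ⟨s, hs, g, rfl⟩
    exact FactorsThroughProj.mul_right c hs g
  · rintro s ⟨i, γ, hsγ⟩
    refine AddSubgroup.subset_closure ⟨(c.incl i).comp (c.proj i), ⟨i, c.incl i, rfl⟩, s, ?_⟩
    exact LinMap.ext (funext fun x => by simp [hsγ, proj_incl])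

theorem mem_closure_apply_factorSubring (x : P) :
    x ∈ AddSubgroup.closure {y : P | ∃ g ∈ c.factorSubring, ∃ z : P, y = g.1 z} := by
  obtain ⟨i, y, rfl⟩ := c.exhaustive x
  exact AddSubgroup.subset_closure
    ⟨(c.incl i).comp (c.proj i), ⟨i, c.incl i, rfl⟩, (c.incl i).1 y,
      by rw [LinMap.comp_apply, c.proj_incl]⟩

theorem isFGSet_range_of_idempotent (hfg : ∀ i, IsFG R (D.obj i).carrier) {f : LinMap R P P}
    (hf : f ∈ c.factorSubring) (hff : f * f = f) : IsFGSet R (Set.range f.1) := by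
  obtain ⟨i, γ, hfγ⟩ := hf
  have hrange : Set.range f.1 = Set.range (f.comp γ).1 := by
    refine subset_antisymm ?_ (Set.range_comp_subset_range γ.1 f.1)
    rintro _ ⟨x, rfl⟩
    refine ⟨(c.proj i).1 x, ?_⟩
    rw [LinMap.comp_apply, ← congrFun hfγ]
    exact congrArg (fun g : LinMap R P P => g.1 x) hff
  rw [hrange]
  exact (hfg i).isFGSet_range _

end LimitCocone

end DirectLimit

theorem split_direct_limit_projections_and_endomorphism_ring_general
    (R : Type u) [NonUnitalRing R]
    (ι : Type u) (rel : ι → ι → Prop)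
    (htrans : ∀ {i j k}, rel i j → rel j k → rel i k)
    (hdir : ∀ i j, ∃ k, rel i k ∧ rel j k)
    (D : SplitSystem.{u, u} R ι rel)
    (hfg : ∀ i, IsFG R (D.obj i).carrier)
    (P : Type u) [AddCommGroup P] [LMod R P]
    (c : LimitCocone R D P) :
    -- (a), (b): there are projections `ψ_i : P → P_i` with `φ_i ψ_i = id` and
    -- `ψ_j ψ_{ji} = ψ_i`:
    ∃ ψ : ∀ i, LinMap R P (D.obj i).carrier,
      (∀ i (x : (D.obj i).carrier), (ψ i).1 ((c.incl i).1 x) = x) ∧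
      (∀ {i j} (h : rel i j) (x : P), (D.split h).1 ((ψ j).1 x) = (ψ i).1 x) ∧
      -- (c): `S = {g ∈ End_R(P) | g factors through one of the ψ_i}`
      ∃ Ssub : NonUnitalSubring (LinMap R P P),
        (Ssub : Set (LinMap R P P)) =
          {g : LinMap R P P | ∃ (i : ι) (γ : LinMap R (D.obj i).carrier P),
            g.1 = fun x => γ.1 ((ψ i).1 x)} ∧
        -- `S·End_R(P) = S`:
        ((AddSubgroup.closure {h : LinMap R P P | ∃ s ∈ Ssub, ∃ g : LinMap R P P, h = s * g} :
          AddSubgroup (LinMap R P P)) : Set (LinMap R P P)) = ↑Ssub ∧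
        -- `P` is a unitary `R`-`S`-bimodule:
        IsUnitary R P ∧
        (∀ x : P, x ∈ AddSubgroup.closure {y : P | ∃ g ∈ Ssub, ∃ z : P, y = g.1 z}) ∧
        -- `Pf` is a finitely generated unitary left `R`-module for `f² = f ∈ S`:
        (∀ f : LinMap R P P, f ∈ Ssub → f * f = f → IsFGSet R (Set.range f.1)) ∧
        -- `S` is isomorphic to the direct limit of the rings `End_R(P_i)`
        -- (universal property of the direct limit of rings):
        ∃ Ω : ∀ i, LinMap R (D.obj i).carrier (D.obj i).carrier → ↥Ssub,
          (∀ i (a b : LinMap R (D.obj i).carrier (D.obj i).carrier),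
            Ω i (a + b) = Ω i a + Ω i b) ∧
          (∀ i (a b : LinMap R (D.obj i).carrier (D.obj i).carrier),
            Ω i (a * b) = Ω i a * Ω i b) ∧
          (∀ {i j} (h : rel i j) (a : LinMap R (D.obj i).carrier (D.obj i).carrier),
            Ω j (D.endTrans h a) = Ω i a) ∧
          (∀ (T : Type u) [NonUnitalRing T]
            (θ : ∀ i, LinMap R (D.obj i).carrier (D.obj i).carrier → T),
            (∀ i (a b : LinMap R (D.obj i).carrier (D.obj i).carrier),
              θ i (a + b) = θ i a + θ i b) →
            (∀ i (a b : LinMap R (D.obj i).carrier (D.obj i).carrier),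
              θ i (a * b) = θ i a * θ i b) →
            (∀ {i j} (h : rel i j) (a : LinMap R (D.obj i).carrier (D.obj i).carrier),
              θ j (D.endTrans h a) = θ i a) →
            ∃! τ : ↥Ssub → T,
              ((∀ a b, τ (a + b) = τ a + τ b) ∧ (∀ a b, τ (a * b) = τ a * τ b)) ∧
              ∀ i a, τ (Ω i a) = θ i a) := by
  have : IsTrans ι rel := ⟨fun _ _ _ => htrans⟩
  have : IsDirected ι rel := ⟨hdir⟩
  let Ω i (a : LinMap R (D.obj i).carrier (D.obj i).carrier) : c.factorSubring :=
    ⟨c.endMap i a, c.endMap_mem i a⟩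
  have hΩ_add : ∀ i a b, Ω i (a + b) = Ω i a + Ω i b :=
    fun i a b => Subtype.ext (c.endMap_add i a b)
  have hΩ_mul : ∀ i a b, Ω i (a * b) = Ω i a * Ω i b :=
    fun i a b => Subtype.ext (c.endMap_mul i a b)
  have hΩ_endTrans : ∀ {i j} (h : rel i j) a, Ω j (D.endTrans h a) = Ω i a :=
    fun h a => Subtype.ext (c.endMap_endTrans h a)
  have hΩ_inj : ∀ i, Function.Injective (Ω i) :=
    fun i a b hab => c.endMap_injective i (congrArg Subtype.val hab)
  have hΩ_surj : ∀ s, ∃ i a, Ω i a = s := fun s =>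
    (c.exists_endMap_eq hfg s.2).imp fun _ ⟨a, ha⟩ => ⟨a, Subtype.ext ha⟩
  exact ⟨c.proj, c.proj_incl, c.split_proj, c.factorSubring, rfl, c.closure_factorSubring_mul,
    c.isUnitary, c.mem_closure_apply_factorSubring,
    fun f hf hff => c.isFGSet_range_of_idempotent hfg hf hff, Ω, hΩ_add, hΩ_mul, hΩ_endTrans,
    fun T _ θ => existsUnique_lift_of_directed_union (fun h => D.endTrans h) Ω hΩ_add hΩ_mul
      hΩ_endTrans hΩ_inj hΩ_surj T θ⟩

theorem split_direct_limit_projections_and_endomorphism_ring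
    (R : Type u) [NonUnitalRing R] [HasLocalUnits R]
    (ι : Type u) (rel : ι → ι → Prop)
    (hrefl : ∀ i, rel i i) (htrans : ∀ {i j k}, rel i j → rel j k → rel i k)
    (hne : Nonempty ι) (hdir : ∀ i j, ∃ k, rel i k ∧ rel j k)
    (D : SplitSystem.{u, u} R ι rel)
    (hfg : ∀ i, IsFG R (D.obj i).carrier)
    (P : Type u) [AddCommGroup P] [LMod R P]
    (c : LimitCocone R D P) :
    -- (a), (b): there are projections `ψ_i : P → P_i` with `φ_i ψ_i = id` and
    -- `ψ_j ψ_{ji} = ψ_i`: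
    ∃ ψ : ∀ i, LinMap R P (D.obj i).carrier,
      (∀ i (x : (D.obj i).carrier), (ψ i).1 ((c.incl i).1 x) = x) ∧
      (∀ {i j} (h : rel i j) (x : P), (D.split h).1 ((ψ j).1 x) = (ψ i).1 x) ∧
      -- (c): `S = {g ∈ End_R(P) | g factors through one of the ψ_i}`
      ∃ Ssub : NonUnitalSubring (LinMap R P P),
        (Ssub : Set (LinMap R P P)) =
          {g : LinMap R P P | ∃ (i : ι) (γ : LinMap R (D.obj i).carrier P),
            g.1 = fun x => γ.1 ((ψ i).1 x)} ∧
        -- `S·End_R(P) = S`: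
        ((AddSubgroup.closure {h : LinMap R P P | ∃ s ∈ Ssub, ∃ g : LinMap R P P, h = s * g} :
          AddSubgroup (LinMap R P P)) : Set (LinMap R P P)) = ↑Ssub ∧
        -- `P` is a unitary `R`-`S`-bimodule:
        IsUnitary R P ∧
        (∀ x : P, x ∈ AddSubgroup.closure {y : P | ∃ g ∈ Ssub, ∃ z : P, y = g.1 z}) ∧
        -- `Pf` is a finitely generated unitary left `R`-module for `f² = f ∈ S`:
        (∀ f : LinMap R P P, f ∈ Ssub → f * f = f → IsFGSet R (Set.range f.1)) ∧
        -- `S` is isomorphic to the direct limit of the rings `End_R(P_i)`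
        -- (universal property of the direct limit of rings):
        ∃ Ω : ∀ i, LinMap R (D.obj i).carrier (D.obj i).carrier → ↥Ssub,
          (∀ i (a b : LinMap R (D.obj i).carrier (D.obj i).carrier),
            Ω i (a + b) = Ω i a + Ω i b) ∧
          (∀ i (a b : LinMap R (D.obj i).carrier (D.obj i).carrier),
            Ω i (a * b) = Ω i a * Ω i b) ∧
          (∀ {i j} (h : rel i j) (a : LinMap R (D.obj i).carrier (D.obj i).carrier),
            Ω j (D.endTrans h a) = Ω i a) ∧
          (∀ (T : Type u) [NonUnitalRing T]
            (θ : ∀ i, LinMap R (D.obj i).carrier (D.obj i).carrier → T),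
            (∀ i (a b : LinMap R (D.obj i).carrier (D.obj i).carrier),
              θ i (a + b) = θ i a + θ i b) →
            (∀ i (a b : LinMap R (D.obj i).carrier (D.obj i).carrier),
              θ i (a * b) = θ i a * θ i b) →
            (∀ {i j} (h : rel i j) (a : LinMap R (D.obj i).carrier (D.obj i).carrier),
              θ j (D.endTrans h a) = θ i a) →
            ∃! τ : ↥Ssub → T,
              ((∀ a b, τ (a + b) = τ a + τ b) ∧ (∀ a b, τ (a * b) = τ a * τ b)) ∧
              ∀ i a, τ (Ω i a) = θ i a) :=
  split_direct_limit_projections_and_endomorphism_ring_general R ι rel htrans hdir D hfg P c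
end

section
/- Let R and S be rings with local units and let P be an R-S-bimodule. If P is a locally projective left R-module and Pf is a finitely generated left R-module for each idempotent f ∈ S, then the functor SHom_R(P,−) : RMod → SMod is exact. -/
set_option linter.unusedVariables false

/-! ### Core: non-unital rings with local units, modules, homomorphisms, categories -/

universe u v w

open MulOpposite CategoryTheory

section lift

variable {R : Type u} [NonUnitalRing R]

theorem exists_idempotent_smul_eq_of_mem_umax [HasLocalUnits R] {H : Type v} [AddCommGroup H]
    [LMod R H] {h : H} (hh : h ∈ umax R H) : ∃ e : R, e * e = e ∧ e • h = h := by
  classical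
  induction hh using AddSubgroup.closure_induction with
  | mem x hx =>
    obtain ⟨r, h', rfl⟩ := hx
    obtain ⟨e, he, hr⟩ := HasLocalUnits.exists_unit {r}
    exact ⟨e, he, by rw [← LMod.mul_smul', (hr r (Finset.mem_singleton_self r)).1]⟩
  | zero =>
    obtain ⟨e, he, -⟩ := HasLocalUnits.exists_unit (∅ : Finset R)
    exact ⟨e, he, LMod.smul_zero' e⟩
  | add x y _ _ ihx ihy =>
    obtain ⟨e₁, -, hx⟩ := ihx
    obtain ⟨e₂, -, hy⟩ := ihy
    obtain ⟨e, he, hunit⟩ := HasLocalUnits.exists_unit {e₁, e₂}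
    have absorb : ∀ {a : R} {z : H}, a ∈ ({e₁, e₂} : Finset R) → a • z = z → e • z = z :=
      fun ha hz => by rw [← hz, ← LMod.mul_smul', (hunit _ ha).1]
    exact ⟨e, he, by rw [LMod.smul_add', absorb (by simp) hx, absorb (by simp) hy]⟩
  | neg x _ ih =>
    obtain ⟨e, he, hx⟩ := ih
    exact ⟨e, he, by rw [LMod.smul_neg', hx]⟩

variable {M : Type v} {N : Type w} [AddCommGroup M] [AddCommGroup N] [LMod R M] [LMod R N]

def LinMap.comp_s7 {K : Type*} [AddCommGroup K] [LMod R K] (g : LinMap R N K) (f : LinMap R M N) :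
    LinMap R M K :=
  ⟨fun x => g.1 (f.1 x), ⟨fun x y => by rw [f.2.map_add, g.2.map_add],
    fun r x => by rw [f.2.map_smul, g.2.map_smul]⟩⟩

theorem LinMap.exists_lift_of_injective {X : Type*} [AddCommGroup X] [LMod R X]
    (φ : LinMap R M N) (hφ : Function.Injective φ.1) (T : LinMap R X N)
    (hT : ∀ x, ∃ m, φ.1 m = T.1 x) : ∃ T' : LinMap R X M, ∀ x, φ.1 (T'.1 x) = T.1 x := by
  choose T' hT' using hT
  refine ⟨⟨T', fun x y => hφ ?_, fun r x => hφ ?_⟩, hT'⟩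
  · rw [φ.2.map_add, hT', hT', hT', T.2.map_add]
  · rw [φ.2.map_smul, hT', hT', T.2.map_smul]

theorem lspan_subset_range (φ : LinMap R M N) {X : Set N} (hX : X ⊆ Set.range φ.1) :
    ∀ n ∈ lspan R X, n ∈ Set.range φ.1 := by
  intro n hn
  induction hn using AddSubgroup.closure_induction with
  | mem x hx =>
    rcases hx with hx | ⟨r, y, hy, rfl⟩
    · exact hX hx
    · obtain ⟨m, rfl⟩ := hX hy
      exact ⟨r • m, φ.2.map_smul r m⟩
  | zero => exact ⟨0, φ.2.map_zero⟩
  | add x y _ _ hx hy =>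
    obtain ⟨m, rfl⟩ := hx
    obtain ⟨m', rfl⟩ := hy
    exact ⟨m + m', φ.2.map_add m m'⟩
  | neg x _ hx =>
    obtain ⟨m, rfl⟩ := hx
    exact ⟨-m, φ.2.map_neg m⟩

theorem UMod.exists_lift_of_projective {Q B C : UMod.{u, v} R} [CategoryTheory.Projective Q]
    (g : B ⟶ C) (hg : Function.Surjective g.1) (θ : Q ⟶ C) :
    ∃ l : Q ⟶ B, ∀ y, g.1 (l.1 y) = θ.1 y := by
  have : CategoryTheory.Epi g := ⟨fun {_} u v huv => LinMap.ext (funext fun c => by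
    obtain ⟨b, rfl⟩ := hg c
    exact congrFun (congrArg Subtype.val huv) b)⟩
  exact ⟨CategoryTheory.Projective.factorThru θ g,
    fun y => congrFun (congrArg Subtype.val (CategoryTheory.Projective.factorThru_comp θ g)) y⟩

end lift

namespace LimitCocone

variable {R : Type u} [NonUnitalRing R] {ι : Type w} {rel : ι → ι → Prop}
  {D : SplitSystem.{u, v} R ι rel} {P : Type v} [AddCommGroup P] [LMod R P]

theorem incl_injective (c : LimitCocone R D P) (i : ι) : Function.Injective (c.incl i).1 := by
  intro y y' hyy'
  have hzero : (c.incl i).1 (y - y') = 0 := by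
    rw [sub_eq_add_neg, (c.incl i).2.map_add, (c.incl i).2.map_neg, hyy', add_neg_cancel]
  obtain ⟨j, hij, hj⟩ := c.eventually_zero i _ hzero
  rw [← sub_eq_zero, ← D.split_map hij (y - y'), hj, (D.split hij).2.map_zero]

theorem exists_subset_range_incl_of_isFGSet (c : LimitCocone R D P) [IsTrans ι rel] [Nonempty ι]
    (hdir : Directed rel id) {A : Set P} (hA : IsFGSet R A) :
    ∃ k, A ⊆ Set.range (c.incl k).1 := by
  classical
  obtain ⟨gens, -, hspan⟩ := hA
  choose idx y hy using c.exhaustive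
  obtain ⟨k, hk⟩ := hdir.finset_le (gens.image idx)
  refine ⟨k, fun a ha => lspan_subset_range _ (fun p hp => ?_) a (hspan a ha)⟩
  have hpk : rel (idx p) k := hk _ (Finset.mem_image_of_mem idx hp)
  exact ⟨(D.map hpk).1 (y p), by rw [c.compat hpk, hy]⟩

end LimitCocone

section shomExact

variable {R S : Type u} [NonUnitalRing R] [NonUnitalRing S]
  {P : Type u} [AddCommGroup P] [LMod R P] [LMod Sᵐᵒᵖ P] [SMulCommClass R Sᵐᵒᵖ P]
  {M N : Type u} [AddCommGroup M] [AddCommGroup N] [LMod R M] [LMod R N]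

theorem SHom.exists_idempotent_apply_smul [HasLocalUnits S] (β : SHom R S P N) :
    ∃ e : S, e * e = e ∧ ∀ x, β.1.1 (op e • x) = β.1.1 x := by
  obtain ⟨e, he, heβ⟩ := exists_idempotent_smul_eq_of_mem_umax β.2
  exact ⟨e, he, fun x => congrArg (fun γ : LinMap R P N => γ.1 x) heβ⟩

/-- `α·e` lies in `S·Hom_R(P, M)` and still lifts `β`, for an idempotent `e` with
`β·e = β`. -/
theorem exists_sHomMap_eq_of_lift [HasLocalUnits S] (g : LinMap R M N) (β : SHom R S P N)
    (α : LinMap R P M) (hα : ∀ x, g.1 (α.1 x) = β.1.1 x) :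
    ∃ α' : SHom R S P M, sHomMap g α' = β := by
  obtain ⟨e, -, heβ⟩ := SHom.exists_idempotent_apply_smul β
  exact ⟨⟨e • α, smul_mem_umax e α⟩, Subtype.ext (LinMap.ext (funext fun x =>
    (hα (op e • x)).trans (heβ x)))⟩

theorem sHomMap_injective {f : LinMap R M N} (hf : Function.Injective f.1) :
    Function.Injective (sHomMap (S := S) (P := P) f) := fun α α' h =>
  Subtype.ext (LinMap.ext (funext fun x => hf (congrFun (congrArg (fun γ => γ.1.1) h) x)))

theorem sHomMap_eq_zero_iff [HasLocalUnits S] {K : Type u} [AddCommGroup K] [LMod R K]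
    {f : LinMap R M N} {g : LinMap R N K} (hf : Function.Injective f.1)
    (hexact : ∀ n, g.1 n = 0 ↔ ∃ m, f.1 m = n) (β : SHom R S P N) :
    sHomMap g β = 0 ↔ ∃ α : SHom R S P M, sHomMap f α = β := by
  constructor
  · intro hβ
    obtain ⟨α, hα⟩ := LinMap.exists_lift_of_injective f hf β.1 fun x =>
      (hexact _).1 (congrFun (congrArg (fun γ => γ.1.1) hβ) x)
    exact exists_sHomMap_eq_of_lift f β α hα
  · rintro ⟨α, rfl⟩
    exact Subtype.ext (LinMap.ext (funext fun x => (hexact _).2 ⟨α.1.1 x, rfl⟩))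

/-- For `β = β·e`, the finitely generated `Pe` lies in the image of one `P_k`, on which `P → P_k`
is injective; `x ↦ xe` thus factors through `P_k`, and projectivity of `P_k` lifts `β` there. -/
theorem sHomMap_surjective [HasLocalUnits S] (hlp : IsLocallyProjective R P)
    (hfg : ∀ f : S, f * f = f → IsFGSet R (Set.range (fun x : P => (op f : Sᵐᵒᵖ) • x)))
    {B C : UMod.{u, u} R} {g : B ⟶ C} (hg : Function.Surjective g.1) :
    Function.Surjective (sHomMap (S := S) (P := P) g) := by
  obtain ⟨ι, rel, -, htrans, hne, hdir, D, c, hproj⟩ := hlp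
  have : IsTrans ι rel := ⟨fun _ _ _ => htrans⟩
  intro β
  obtain ⟨e, he, heβ⟩ := SHom.exists_idempotent_apply_smul β
  obtain ⟨k, hk⟩ := c.exists_subset_range_incl_of_isFGSet hdir (hfg e he)
  have : CategoryTheory.Projective (D.obj k) := (hproj k).2
  -- `e • id` is right multiplication by `e`
  obtain ⟨T, hT⟩ := LinMap.exists_lift_of_injective (c.incl k) (c.incl_injective k)
    (e • ⟨id, fun _ _ => rfl, fun _ _ => rfl⟩ : LinMap R P P) fun x => hk ⟨x, rfl⟩
  obtain ⟨l, hl⟩ := UMod.exists_lift_of_projective g hg (LinMap.comp_s7 β.1 (c.incl k))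
  refine exists_sHomMap_eq_of_lift g β (LinMap.comp_s7 l T) fun x => ?_
  calc g.1 (l.1 (T.1 x)) = β.1.1 ((c.incl k).1 (T.1 x)) := hl _
    _ = β.1.1 (op e • x) := congrArg β.1.1 (hT x)
    _ = β.1.1 x := heβ x

end shomExact

theorem sHom_exact_general
    (R S : Type u) [NonUnitalRing R] [NonUnitalRing S]
    [HasLocalUnits S]
    (P : Type u) [AddCommGroup P] [LMod R P] [LMod Sᵐᵒᵖ P] [SMulCommClass R Sᵐᵒᵖ P]
    (hlp : IsLocallyProjective R P)
    (hfg : ∀ f : S, f * f = f →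
      IsFGSet R (Set.range (fun x : P => (MulOpposite.op f : Sᵐᵒᵖ) • x))) :
    ∀ (A B C : UMod.{u, u} R) (f : A ⟶ B) (g : B ⟶ C),
      Function.Injective f.1 → Function.Surjective g.1 →
      (∀ b : B.carrier, g.1 b = 0 ↔ ∃ a : A.carrier, f.1 a = b) →
      (Function.Injective (sHomMap (S := S) (P := P) f) ∧
       Function.Surjective (sHomMap (S := S) (P := P) g) ∧
       (∀ β : SHom R S P B.carrier,
         sHomMap (S := S) (P := P) g β = 0 ↔
           ∃ α : SHom R S P A.carrier, sHomMap (S := S) (P := P) f α = β)) :=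
  fun _ _ _ _ _ hf hg hexact =>
    ⟨sHomMap_injective hf, sHomMap_surjective hlp hfg hg, sHomMap_eq_zero_iff hf hexact⟩

theorem sHom_exact
    (R S : Type u) [NonUnitalRing R] [NonUnitalRing S]
    [HasLocalUnits R] [HasLocalUnits S]
    (P : Type u) [AddCommGroup P] [LMod R P] [LMod Sᵐᵒᵖ P] [SMulCommClass R Sᵐᵒᵖ P]
    (hlp : IsLocallyProjective R P)
    (hfg : ∀ f : S, f * f = f →
      IsFGSet R (Set.range (fun x : P => (MulOpposite.op f : Sᵐᵒᵖ) • x))) :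
    ∀ (A B C : UMod.{u, u} R) (f : A ⟶ B) (g : B ⟶ C),
      Function.Injective f.1 → Function.Surjective g.1 →
      (∀ b : B.carrier, g.1 b = 0 ↔ ∃ a : A.carrier, f.1 a = b) →
      (Function.Injective (sHomMap (S := S) (P := P) f) ∧
       Function.Surjective (sHomMap (S := S) (P := P) g) ∧
       (∀ β : SHom R S P B.carrier,
         sHomMap (S := S) (P := P) g β = 0 ↔
           ∃ α : SHom R S P A.carrier, sHomMap (S := S) (P := P) f α = β)) :=
  sHom_exact_general R S P hlp hfg
end
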